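/- arXiv:1609.09787 — 6 statements merged into one kernel-verified Lean document; each statement's English description precedes it below -/
import Mathlib

section
/- Let F be a field of characteristic ≠ 2 and let a, b ∈ F^×. If the quaternion algebra H_{a,b} over F is split, i.e. isomorphic as an F-algebra to the algebra of 2×2 matrices over F, then S_{a,b}(F) = F; that is, for every t ∈ F there exist x₁, x₂, x₃, x₄ ∈ F with t = 2x₁ and x₁² − a·x₂² − b·x₃² + a·b·x₄² = 1. -/
/-!
Every element `x` of `H_{a,b}` satisfies `x² = tr(x) x - n(x)`. Pull back the companion matrix
`C = !![0, -1; 1, t]` along the splitting isomorphism: its preimage satisfies this relation, hence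
so does `C`. Since `C` is not scalar, the relation `C² = s C - n` determines `s = tr C = t` and
`n = det C = 1`.
-/

namespace QuaternionAlgebra

variable {R : Type*} [CommRing R] {c₁ c₃ : R}

theorem mul_self_eq_two_re_smul_sub (x : QuaternionAlgebra R c₁ 0 c₃) :
    x * x = (2 * x.re) • x -
      (x.re ^ 2 - c₁ * x.imI ^ 2 - c₃ * x.imJ ^ 2 + c₁ * c₃ * x.imK ^ 2) • 1 := by
  ext <;> simp <;> ring

end QuaternionAlgebra

namespace Matrix

variable {R : Type*} [CommRing R] [IsDomain R]

theorem trace_eq_and_det_eq_of_mul_self_eq {M : Matrix (Fin 2) (Fin 2) R} (hM : M 0 1 ≠ 0)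
    {s n : R} (h : M * M = s • M - n • 1) : s = M.trace ∧ n = M.det := by
  have h₀₀ := congrFun₂ h 0 0
  have h₀₁ := congrFun₂ h 0 1
  simp only [mul_apply, Fin.sum_univ_two, sub_apply, smul_apply, one_apply_eq,
    one_apply_ne zero_ne_one, smul_eq_mul, mul_one, mul_zero, sub_zero] at h₀₀ h₀₁
  have hs : s = M 0 0 + M 1 1 := mul_right_cancel₀ hM (by linear_combination -h₀₁)
  rw [trace_fin_two, det_fin_two]
  exact ⟨hs, by linear_combination h₀₀ + M 0 0 * hs⟩

end Matrix

theorem traces_of_norm_one_eq_field_of_split_general (F : Type*) [Field F]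
    (a b : F)
    (hsplit : Nonempty (QuaternionAlgebra F a 0 b ≃ₐ[F] Matrix (Fin 2) (Fin 2) F))
    (t : F) :
    ∃ x₁ x₂ x₃ x₄ : F,
      t = 2 * x₁ ∧ x₁ ^ 2 - a * x₂ ^ 2 - b * x₃ ^ 2 + a * b * x₄ ^ 2 = 1 := by
  obtain ⟨φ⟩ := hsplit
  set q := φ.symm !![0, -1; 1, t]
  have hq := congrArg φ q.mul_self_eq_two_re_smul_sub
  rw [map_mul, map_sub, map_smul, map_smul, map_one, AlgEquiv.apply_symm_apply] at hq
  obtain ⟨htrace, hdet⟩ := Matrix.trace_eq_and_det_eq_of_mul_self_eq (by simp) hq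
  refine ⟨q.re, q.imI, q.imJ, q.imK, ?_, ?_⟩
  · simpa [Matrix.trace_fin_two] using htrace.symm
  · simpa [Matrix.det_fin_two] using hdet

/-- **Lemma.** Let `F` be a field of characteristic `≠ 2` and `a, b ∈ F^×`. If the quaternion
algebra `H_{a,b}` over `F` is split, i.e. `F`-algebra isomorphic to the `2×2` matrix algebra over
`F`, then `S_{a,b}(F) = F`: every `t ∈ F` is the reduced trace `2x₁` of a norm-one element
`x₁ + x₂α + x₃β + x₄αβ` of `H_{a,b}`. -/
theorem traces_of_norm_one_eq_field_of_split (F : Type*) [Field F] (hchar : ringChar F ≠ 2)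
    (a b : F) (ha : a ≠ 0) (hb : b ≠ 0)
    (hsplit : Nonempty (QuaternionAlgebra F a 0 b ≃ₐ[F] Matrix (Fin 2) (Fin 2) F))
    (t : F) :
    ∃ x₁ x₂ x₃ x₄ : F,
      t = 2 * x₁ ∧ x₁ ^ 2 - a * x₂ ^ 2 - b * x₃ ^ 2 + a * b * x₄ ^ 2 = 1 :=
  traces_of_norm_one_eq_field_of_split_general F a b hsplit t
end

section
/- Let K be a number field and let ω : K → ℝ be a real embedding (a ring homomorphism from K into ℝ). Then the set K_ω^× = {x ∈ K^× : ω(x) > 0} is diophantine over K. -/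
open Finset

/-- Lagrange for nonnegative rationals. -/
lemma rat_sum_four_squares (q : ℚ) (hq : 0 ≤ q) : ∃ t : Fin 4 → ℚ, q = ∑ i, (t i) ^ 2 := by
  obtain ⟨a, b, c, d, habcd⟩ := Nat.sum_four_squares (q.num.toNat * q.den)
  refine ⟨![(a : ℚ) / q.den, (b : ℚ) / q.den, (c : ℚ) / q.den, (d : ℚ) / q.den], ?_⟩
  have hden : (q.den : ℚ) ≠ 0 := by exact_mod_cast q.den_nz
  have hnum : ((q.num.toNat : ℤ) : ℚ) = (q.num : ℚ) := by
    rw [Int.toNat_of_nonneg (Rat.num_nonneg.2 hq)]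
  have : ((a:ℚ)^2 + b^2 + c^2 + d^2) = (q.num : ℚ) * q.den := by
    have := congrArg (fun n : ℕ => (n : ℚ)) habcd
    push_cast at this ⊢
    rw [this]
    push_cast [← hnum]
    ring
  rw [Fin.sum_univ_four]
  simp only [Matrix.cons_val_zero, Matrix.cons_val_one, Matrix.head_cons, Matrix.cons_val_two,
    Matrix.cons_val_three, Matrix.tail_cons]
  rw [div_pow, div_pow, div_pow, div_pow, ← add_div, ← add_div, ← add_div,
    this]
  field_simp
  rw [Rat.mul_den_eq_num]

section SumSq
variable {K : Type*} [Field K] [CharZero K]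

/-- `x` is a sum of `N` squares. -/
def IsSumSqN (N : ℕ) (x : K) : Prop := ∃ y : Fin N → K, x = ∑ i, (y i) ^ 2

lemma IsSumSqN.zero : IsSumSqN (K := K) 0 0 := ⟨![], by simp⟩

lemma IsSumSqN.add {m n : ℕ} {x y : K} (hx : IsSumSqN m x) (hy : IsSumSqN n y) :
    IsSumSqN (m + n) (x + y) := by
  obtain ⟨a, rfl⟩ := hx; obtain ⟨b, rfl⟩ := hy
  refine ⟨Fin.append a b, ?_⟩
  rw [Fin.sum_univ_add]
  simp [Fin.append]

lemma IsSumSqN.mono {m n : ℕ} {x : K} (h : IsSumSqN m x) (hmn : m ≤ n) : IsSumSqN n x := by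
  obtain ⟨k, rfl⟩ := Nat.le.dest hmn
  have h0 : IsSumSqN (K := K) k 0 := ⟨fun _ => 0, by simp⟩
  simpa using h.add h0

lemma isSumSqN_smul_sq (q : ℚ) (hq : 0 ≤ q) (a : K) : IsSumSqN 4 (q • a ^ 2) := by
  obtain ⟨t, rfl⟩ := rat_sum_four_squares q hq
  refine ⟨fun i => (t i : K) * a, ?_⟩
  rw [Rat.smul_def, Rat.cast_sum, Finset.sum_mul]
  exact Finset.sum_congr rfl fun i _ => by push_cast; ring

lemma isSumSqN_sum {ι : Type*} (s : Finset ι) (c : ι → ℚ) (a : ι → K)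
    (hc : ∀ i ∈ s, 0 ≤ c i) : IsSumSqN (4 * s.card) (∑ i ∈ s, c i • (a i) ^ 2) := by
  classical
  induction s using Finset.induction_on with
  | empty => simpa using IsSumSqN.zero
  | @insert j s hj ih =>
    rw [Finset.sum_insert hj, Finset.card_insert_of_notMem hj, Nat.mul_succ, Nat.add_comm]
    exact (isSumSqN_smul_sq _ (hc j (mem_insert_self j s)) _).add
      (ih fun i hi => hc i (mem_insert_of_mem hi)) |>.mono (by omega)

end SumSq

open Finset

section Ordering
variable {K : Type*} [Field K]

/-- Extension step for preorderings: adjoining `-a` for `a ∉ M`. -/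
lemma preordering_step (M : Set K) (hsq : ∀ y : K, y ^ 2 ∈ M)
    (hadd : ∀ ⦃y z⦄, y ∈ M → z ∈ M → y + z ∈ M)
    (hmul : ∀ ⦃y z⦄, y ∈ M → z ∈ M → y * z ∈ M)
    (hneg : (-1 : K) ∉ M) (a : K) (ha : a ∉ M) :
    let M' : Set K := {y | ∃ p ∈ M, ∃ q ∈ M, y = p - a * q}
    (M ⊆ M') ∧ (-a ∈ M') ∧ (∀ y : K, y ^ 2 ∈ M') ∧
      (∀ ⦃y z⦄, y ∈ M' → z ∈ M' → y + z ∈ M') ∧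
      (∀ ⦃y z⦄, y ∈ M' → z ∈ M' → y * z ∈ M') ∧ (-1 : K) ∉ M' := by
  intro M'
  have h0 : (0 : K) ∈ M := by simpa using hsq 0
  have h1 : (1 : K) ∈ M := by simpa using hsq 1
  refine ⟨fun y hy => ⟨y, hy, 0, h0, by ring⟩,
    ⟨0, h0, 1, h1, by ring⟩,
    fun y => ⟨y ^ 2, hsq y, 0, h0, by ring⟩,
    ?_, ?_, ?_⟩
  · rintro y z ⟨p, hp, q, hq, rfl⟩ ⟨p', hp', q', hq', rfl⟩
    exact ⟨p + p', hadd hp hp', q + q', hadd hq hq', by ring⟩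
  · rintro y z ⟨p, hp, q, hq, rfl⟩ ⟨p', hp', q', hq', rfl⟩
    refine ⟨p * p' + a ^ 2 * (q * q'), hadd (hmul hp hp') (hmul (hsq a) (hmul hq hq')),
      p * q' + p' * q, hadd (hmul hp hq') (hmul hp' hq), by ring⟩
  · rintro ⟨p, hp, q, hq, hpq⟩
    by_cases hq0 : q = 0
    · have hp1 : p = -1 := by rw [hq0] at hpq; simpa using hpq.symm
      exact hneg (hp1 ▸ hp)
    · refine ha ?_
      have haq : a * q = 1 + p := by linear_combination hpq
      have : a = (1 + p) * q * (q⁻¹) ^ 2 := by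
        rw [← haq]
        field_simp
      rw [this]
      exact hmul (hmul (hadd h1 hp) hq) (hsq q⁻¹)

/-- From a preordering avoiding `x`, get a real embedding nonnegative on it with `ρ x ≤ 0`. -/
lemma exists_real_embedding_of_not_mem {K : Type*} [Field K] [NumberField K]
    (C : Set K) (hsq : ∀ y : K, y ^ 2 ∈ C)
    (hadd : ∀ ⦃y z⦄, y ∈ C → z ∈ C → y + z ∈ C)
    (hmul : ∀ ⦃y z⦄, y ∈ C → z ∈ C → y * z ∈ C)
    (hneg : (-1 : K) ∉ C) (x : K) (hx : x ∉ C) :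
    ∃ ρ : K →+* ℝ, (∀ t ∈ C, 0 ≤ ρ t) ∧ ρ x ≤ 0 := by
  classical
  -- the collection of preorderings containing `C` and `-x`
  set S : Set (Set K) := {M | C ⊆ M ∧ (∀ y : K, y ^ 2 ∈ M) ∧
    (∀ ⦃y z⦄, y ∈ M → z ∈ M → y + z ∈ M) ∧ (∀ ⦃y z⦄, y ∈ M → z ∈ M → y * z ∈ M) ∧
    (-1 : K) ∉ M ∧ -x ∈ M} with hS
  have h0C : (0 : K) ∈ C := by simpa using hsq 0
  have h1C : (1 : K) ∈ C := by simpa using hsq 1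
  obtain ⟨hsub, hmx, hsq', hadd', hmul', hneg'⟩ :=
    preordering_step C hsq hadd hmul hneg x hx
  have hP0 : {y | ∃ p ∈ C, ∃ q ∈ C, y = p - x * q} ∈ S :=
    ⟨hsub, hsq', hadd', hmul', hneg', hmx⟩
  have chainub : ∀ c ⊆ S, IsChain (· ⊆ ·) c → c.Nonempty → ∃ ub ∈ S, ∀ s ∈ c, s ⊆ ub := by
    intro c hcS hchain hcne
    refine ⟨⋃₀ c, ⟨?_, ?_, ?_, ?_, ?_, ?_⟩, fun s hs => Set.subset_sUnion_of_mem hs⟩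
    · obtain ⟨M₀, hM₀⟩ := hcne
      exact (hcS hM₀).1.trans (Set.subset_sUnion_of_mem hM₀)
    · intro y
      obtain ⟨M₀, hM₀⟩ := hcne
      exact Set.mem_sUnion.2 ⟨M₀, hM₀, (hcS hM₀).2.1 y⟩
    · rintro y z ⟨M₁, hM₁, hy⟩ ⟨M₂, hM₂, hz⟩
      rcases hchain.total hM₁ hM₂ with h | h
      · exact Set.mem_sUnion.2 ⟨M₂, hM₂, (hcS hM₂).2.2.1 (h hy) hz⟩
      · exact Set.mem_sUnion.2 ⟨M₁, hM₁, (hcS hM₁).2.2.1 hy (h hz)⟩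
    · rintro y z ⟨M₁, hM₁, hy⟩ ⟨M₂, hM₂, hz⟩
      rcases hchain.total hM₁ hM₂ with h | h
      · exact Set.mem_sUnion.2 ⟨M₂, hM₂, (hcS hM₂).2.2.2.1 (h hy) hz⟩
      · exact Set.mem_sUnion.2 ⟨M₁, hM₁, (hcS hM₁).2.2.2.1 hy (h hz)⟩
    · rintro ⟨M₁, hM₁, hy⟩
      exact (hcS hM₁).2.2.2.2.1 hy
    · obtain ⟨M₀, hM₀⟩ := hcne
      exact Set.mem_sUnion.2 ⟨M₀, hM₀, (hcS hM₀).2.2.2.2.2⟩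
  obtain ⟨M, -, hMmax⟩ := zorn_subset_nonempty S chainub _ hP0
  obtain ⟨hCM, hsqM, haddM, hmulM, hnegM, hmxM⟩ := hMmax.prop
  -- M is total
  have htot : ∀ a : K, a ∈ M ∨ -a ∈ M := by
    intro a
    by_cases ha : a ∈ M
    · exact Or.inl ha
    · obtain ⟨hsub2, hma, hsq2, hadd2, hmul2, hneg2⟩ :=
        preordering_step M hsqM haddM hmulM hnegM a ha
      have hM'S : {y | ∃ p ∈ M, ∃ q ∈ M, y = p - a * q} ∈ S :=
        ⟨hCM.trans hsub2, hsq2, hadd2, hmul2, hneg2, hsub2 hmxM⟩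
      have := hMmax.eq_of_subset hM'S hsub2
      exact Or.inr (this ▸ hma)
  -- M is salient
  have hsal : ∀ a : K, a ∈ M → -a ∈ M → a = 0 := by
    intro a ha hna
    by_contra ha0
    refine hnegM ?_
    have : (-1 : K) = a * -a * (a⁻¹) ^ 2 := by field_simp
    rw [this]
    exact hmulM (hmulM ha hna) (hsqM a⁻¹)
  -- integrality data, recorded before we change the order instances
  have key : ∀ y : K, ∃ (e : ℕ) (c : ℕ → ℚ),
      y ^ (e + 1) = -∑ i ∈ Finset.range (e + 1), (c i : K) * y ^ i := by
    intro y
    have hint : IsIntegral ℚ y := IsIntegral.of_finite ℚ y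
    have hmono := minpoly.monic hint
    have hdeg : (minpoly ℚ y).natDegree ≠ 0 := (minpoly.natDegree_pos hint).ne'
    obtain ⟨e, he0⟩ := Nat.exists_eq_succ_of_ne_zero hdeg
    have he : (minpoly ℚ y).natDegree = e + 1 := by omega
    have haev : (Polynomial.aeval y) (minpoly ℚ y) = 0 := minpoly.aeval ℚ y
    rw [Polynomial.aeval_eq_sum_range, Finset.sum_range_succ, hmono.coeff_natDegree,
      one_smul] at haev
    refine ⟨e, fun i => (minpoly ℚ y).coeff i, ?_⟩
    rw [← he]
    have : y ^ (minpoly ℚ y).natDegree =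
        -∑ i ∈ Finset.range (minpoly ℚ y).natDegree, (minpoly ℚ y).coeff i • y ^ i := by
      linear_combination haev
    rw [this]
    congr 1
    exact Finset.sum_congr rfl fun i _ => by rw [Rat.smul_def]
  -- make `K` a linearly ordered field with nonnegative cone `M`
  let MC : RingCone K :=
    { carrier := M
      add_mem' := fun {a b} ha hb => haddM ha hb
      zero_mem' := by simpa using hsqM 0
      mul_mem' := fun {a b} ha hb => hmulM ha hb
      one_mem' := by simpa using hsqM 1
      eq_zero_of_mem_of_neg_mem' := fun {a} ha hna => hsal a ha hna }
  haveI : HasMemOrNegMem MC := ⟨htot⟩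
  letI lo : LinearOrder K := LinearOrder.mkOfAddGroupCone MC
  haveI lof : IsStrictOrderedRing K :=
    haveI : IsOrderedRing K := IsOrderedRing.mkOfCone MC
    IsOrderedRing.toIsStrictOrderedRing K
  have hle : ∀ y : K, (0 : K) ≤ y ↔ y ∈ M := by
    intro y
    show y - 0 ∈ MC ↔ y ∈ M
    rw [sub_zero]
    rfl
  haveI arch : Archimedean K := by
    rw [archimedean_iff_rat_le]
    intro y
    obtain ⟨e, c, hc⟩ := key y
    set B : ℚ := ∑ i ∈ Finset.range (e + 1), |c i| with hB
    refine ⟨B + 1, ?_⟩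
    by_contra hlt
    push_neg at hlt
    have hB0 : 0 ≤ B := Finset.sum_nonneg fun i _ => abs_nonneg _
    have h1y : (1 : K) < y := by
      refine lt_of_le_of_lt ?_ hlt
      have h := Rat.cast_le (K := K).2 (show (1:ℚ) ≤ B + 1 by linarith)
      simpa using h
    have hy0 : (0 : K) < y := lt_trans zero_lt_one h1y
    have hterm : ∀ i ∈ Finset.range (e + 1), (-(c i : K)) * y ^ i ≤ (|c i| : K) * y ^ e := by
      intro i hi
      have hie : i ≤ e := by
        have := Finset.mem_range.1 hi
        omega
      have h1 : (-(c i : K)) ≤ (|c i| : K) := by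
        have h := Rat.cast_le (K := K).2 (neg_le_abs (c i))
        push_cast at h
        exact h
      have h2 : y ^ i ≤ y ^ e := pow_le_pow_right₀ h1y.le hie
      calc (-(c i : K)) * y ^ i ≤ (|c i| : K) * y ^ i :=
            mul_le_mul_of_nonneg_right h1 (pow_nonneg hy0.le i)
        _ ≤ (|c i| : K) * y ^ e :=
            mul_le_mul_of_nonneg_left h2 (abs_nonneg _)
    have hchain : y ^ (e + 1) < y ^ (e + 1) := by
      calc y ^ (e + 1) = ∑ i ∈ Finset.range (e + 1), (-(c i : K)) * y ^ i := by
            rw [hc, ← Finset.sum_neg_distrib]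
            exact Finset.sum_congr rfl fun i _ => by ring
        _ ≤ ∑ i ∈ Finset.range (e + 1), (|c i| : K) * y ^ e := Finset.sum_le_sum hterm
        _ = (B : K) * y ^ e := by rw [← Finset.sum_mul, hB]; push_cast; ring
        _ < y * y ^ e := by
            refine mul_lt_mul_of_pos_right ?_ (pow_pos hy0 e)
            calc (B : K) < ((B + 1 : ℚ) : K) := Rat.cast_lt.2 (by linarith)
              _ < y := hlt
        _ = y ^ (e + 1) := by ring
    exact lt_irrefl _ hchain
  let ρ := LinearOrderedField.inducedOrderRingHom K ℝ
  refine ⟨ρ.toRingHom, ?_, ?_⟩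
  · intro t ht
    have h0t : (0 : K) ≤ t := (hle t).2 (hCM ht)
    have hm : ρ 0 ≤ ρ t := ρ.monotone' h0t
    rw [map_zero] at hm
    exact hm
  · have h0x : (0 : K) ≤ -x := (hle _).2 hmxM
    have hm : ρ 0 ≤ ρ (-x) := ρ.monotone' h0x
    rw [map_zero, map_neg] at hm
    show ρ x ≤ 0
    linarith

end Ordering

open Finset

section Approx
variable {K : Type*} [Field K] [NumberField K]

lemma real_embeddings_linearIndependent :
    LinearIndependent ℝ (fun σ : (K →+* ℝ) => (σ : K → ℝ)) := by
  have h := (linearIndependent_monoidHom K ℝ).comp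
    (RingHom.toMonoidHom : (K →+* ℝ) → (K →* ℝ))
    (fun f g hfg => by ext x; exact DFunLike.congr_fun hfg x)
  exact h

lemma span_range_embeddings_eq_top :
    Submodule.span ℝ (Set.range (fun (x : K) (σ : K →+* ℝ) => σ x)) = ⊤ := by
  classical
  letI : Fintype (K →+* ℝ) := Fintype.ofFinite _
  by_contra h
  obtain ⟨φ, hφ0, hφ⟩ := Submodule.exists_dual_map_eq_bot_of_lt_top (Ne.lt_top h) inferInstance
  set c : (K →+* ℝ) → ℝ := fun σ => φ (fun j => if σ = j then 1 else 0) with hc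
  have hzero : ∀ v ∈ Submodule.span ℝ (Set.range (fun (x : K) (σ : K →+* ℝ) => σ x)), φ v = 0 := by
    intro v hv
    have : φ v ∈ Submodule.map φ (Submodule.span ℝ
        (Set.range (fun (x : K) (σ : K →+* ℝ) => σ x))) := Submodule.mem_map_of_mem hv
    rw [hφ] at this
    simpa using this
  have hlin : ∑ σ : K →+* ℝ, c σ • (fun x : K => σ x) = 0 := by
    funext x
    have h1 : φ (fun σ : K →+* ℝ => σ x) = 0 :=
      hzero _ (Submodule.subset_span ⟨x, rfl⟩)
    rw [LinearMap.pi_apply_eq_sum_univ] at h1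
    simpa [hc, mul_comm] using h1
  have hcall : ∀ σ : K →+* ℝ, c σ = 0 :=
    Fintype.linearIndependent_iff.1 (real_embeddings_linearIndependent (K := K)) c hlin
  apply hφ0
  refine LinearMap.ext fun v => ?_
  rw [LinearMap.pi_apply_eq_sum_univ φ v]
  simp only [LinearMap.zero_apply]
  refine Finset.sum_eq_zero fun σ _ => ?_
  have h2 : φ (fun j => if σ = j then 1 else 0) = 0 := hcall σ
  rw [h2, smul_zero]

/-- Weak approximation: an element positive at `ω` and negative at all other real embeddings. -/
lemma exists_alpha (ω : K →+* ℝ) :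
    ∃ α : K, 0 < ω α ∧ ∀ σ : K →+* ℝ, σ ≠ ω → σ α < 0 := by
  classical
  letI : Fintype (K →+* ℝ) := Fintype.ofFinite _
  set Φ : K → ((K →+* ℝ) → ℝ) := fun x σ => σ x with hΦ
  set t : (K →+* ℝ) → ℝ := fun σ => if σ = ω then 1 else -1 with ht
  have htop : t ∈ Submodule.span ℝ (Set.range Φ) := by
    rw [span_range_embeddings_eq_top]; trivial
  obtain ⟨n, f, g, hfg⟩ := Submodule.mem_span_set'.1 htop
  choose a ha using fun i => (g i).2
  set S : ℝ := ∑ i, ‖Φ (a i)‖ with hSdef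
  have hS0 : 0 ≤ S := Finset.sum_nonneg fun i _ => norm_nonneg _
  set M : ℝ := S + 1 with hM
  have hM0 : 0 < M := by linarith
  have hδ : 0 < 1 / M := by positivity
  choose q hq using fun i => exists_rat_near (f i) hδ
  set α : K := ∑ i, (q i : K) * a i with hα
  have hσα : ∀ σ : K →+* ℝ, σ α = ∑ i, (q i : ℝ) * Φ (a i) σ := by
    intro σ
    rw [hα, map_sum]
    exact Finset.sum_congr rfl fun i _ => by rw [map_mul, map_ratCast]
  have hclose : ∀ σ : K →+* ℝ, |σ α - t σ| < 1 := by
    intro σ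
    have htσ : t σ = ∑ i, (f i) * Φ (a i) σ := by
      have := congrFun hfg σ
      rw [← this]
      simp only [Finset.sum_apply, Pi.smul_apply, smul_eq_mul]
      refine Finset.sum_congr rfl fun i _ => by rw [ha i]
    rw [hσα, htσ, ← Finset.sum_sub_distrib]
    calc |∑ i, ((q i : ℝ) * Φ (a i) σ - f i * Φ (a i) σ)|
        ≤ ∑ i, |((q i : ℝ) - f i) * Φ (a i) σ| := by
          refine (Finset.abs_sum_le_sum_abs _ _).trans_eq ?_
          exact Finset.sum_congr rfl fun i _ => by rw [sub_mul]
      _ ≤ ∑ i, (1 / M) * ‖Φ (a i)‖ := by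
          refine Finset.sum_le_sum fun i _ => ?_
          rw [abs_mul]
          refine mul_le_mul ?_ ?_ (abs_nonneg _) hδ.le
          · rw [abs_sub_comm]; exact (hq i).le
          · exact (norm_le_pi_norm (Φ (a i)) σ).trans_eq' (Real.norm_eq_abs _).symm
      _ = (1 / M) * S := by rw [← Finset.mul_sum]
      _ < (1 / M) * M := by
          refine mul_lt_mul_of_pos_left ?_ hδ
          rw [hM]; linarith
      _ = 1 := by field_simp
  refine ⟨α, ?_, ?_⟩
  · have h := abs_lt.1 (hclose ω)
    have h1 : t ω = 1 := by simp [ht]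
    rw [h1] at h
    linarith [h.1]
  · intro σ hσ
    have h := abs_lt.1 (hclose σ)
    have h1 : t σ = -1 := by simp [ht, hσ]
    rw [h1] at h
    linarith [h.2]

end Approx

open Finset Pointwise

section Cone
variable {K : Type*} [Field K] [NumberField K]

variable (α : K)

/-- generators: nonneg rational multiples of squares and of `α` times squares -/
def coneGen : Set K :=
  {x | ∃ q : ℚ, ∃ a : K, 0 ≤ q ∧ (x = q • a ^ 2 ∨ x = q • (α * a ^ 2))}

lemma coneGen_zero : (0 : K) ∈ coneGen α := ⟨0, 0, le_refl 0, Or.inl (by simp)⟩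

lemma coneGen_smul {c : ℚ} (hc : 0 ≤ c) {x : K} (hx : x ∈ coneGen α) :
    c • x ∈ coneGen α := by
  obtain ⟨q, a, hq, h | h⟩ := hx
  · exact ⟨c * q, a, mul_nonneg hc hq, Or.inl (by rw [h, smul_smul])⟩
  · exact ⟨c * q, a, mul_nonneg hc hq, Or.inr (by rw [h, smul_smul])⟩

lemma coneGen_mul {x y : K} (hx : x ∈ coneGen α) (hy : y ∈ coneGen α) :
    x * y ∈ coneGen α := by
  obtain ⟨q, a, hq, hx | hx⟩ := hx <;> obtain ⟨r, b, hr, hy | hy⟩ := hy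
  · exact ⟨q * r, a * b, mul_nonneg hq hr,
      Or.inl (by rw [hx, hy, Rat.smul_def, Rat.smul_def, Rat.smul_def]; push_cast; ring)⟩
  · exact ⟨q * r, a * b, mul_nonneg hq hr,
      Or.inr (by rw [hx, hy, Rat.smul_def, Rat.smul_def, Rat.smul_def]; push_cast; ring)⟩
  · exact ⟨q * r, a * b, mul_nonneg hq hr,
      Or.inr (by rw [hx, hy, Rat.smul_def, Rat.smul_def, Rat.smul_def]; push_cast; ring)⟩
  · exact ⟨q * r, α * a * b, mul_nonneg hq hr,
      Or.inl (by rw [hx, hy, Rat.smul_def, Rat.smul_def, Rat.smul_def]; push_cast; ring)⟩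

lemma coneGen_omega_nonneg (ω : K →+* ℝ) (hαω : 0 < ω α) {x : K} (hx : x ∈ coneGen α) :
    0 ≤ ω x := by
  obtain ⟨q, a, hq, h | h⟩ := hx <;> rw [h, Rat.smul_def, map_mul, map_ratCast]
  · rw [map_pow]
    positivity
  · rw [map_mul, map_pow]
    have : (0:ℝ) ≤ (q:ℝ) := by exact_mod_cast hq
    positivity

/-- The cone: convex hull of the generators. -/
def posCone : Set K := convexHull ℚ (coneGen α)

lemma mem_posCone_iff {x : K} : x ∈ posCone α ↔
    ∃ (ι : Type) (t : Finset ι) (w : ι → ℚ) (z : ι → K), (∀ i ∈ t, 0 ≤ w i) ∧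
      (∀ i ∈ t, z i ∈ coneGen α) ∧ x = ∑ i ∈ t, w i • z i := by
  constructor
  · intro hx
    rw [posCone, _root_.convexHull_eq] at hx
    obtain ⟨ι, t, w, z, hw0, hw1, hz, hx⟩ := hx
    exact ⟨ι, t, w, z, hw0, hz, by rw [← hx, Finset.centerMass_eq_of_sum_1 _ _ hw1]⟩
  · rintro ⟨ι, t, w, z, hw0, hz, rfl⟩
    by_cases hsum : ∑ i ∈ t, w i = 0
    · have hzero : ∀ i ∈ t, w i • z i = 0 := by
        intro i hi
        rw [(Finset.sum_eq_zero_iff_of_nonneg hw0).1 hsum i hi, zero_smul]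
      rw [Finset.sum_congr rfl hzero, Finset.sum_const, smul_zero]
      exact subset_convexHull ℚ _ (coneGen_zero α)
    · have hpos : 0 < ∑ i ∈ t, w i :=
        lt_of_le_of_ne (Finset.sum_nonneg hw0) (Ne.symm hsum)
      have hcm : t.centerMass w z ∈ convexHull ℚ (coneGen α) :=
        Finset.centerMass_mem_convexHull t hw0 hpos hz
      have hx : ∑ i ∈ t, w i • z i = (∑ i ∈ t, w i) • t.centerMass w z := by
        rw [Finset.centerMass, smul_inv_smul₀ hsum]
      rw [hx]
      have h1 : (∑ i ∈ t, w i) • t.centerMass w z ∈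
          (∑ i ∈ t, w i) • convexHull ℚ (coneGen α) :=
        Set.smul_mem_smul_set hcm
      rw [← convexHull_smul] at h1
      exact convexHull_mono
        (by rintro _ ⟨g, hg, rfl⟩; exact coneGen_smul α hpos.le hg) h1

lemma posCone_sq (a : K) : a ^ 2 ∈ posCone α :=
  subset_convexHull ℚ _ ⟨1, a, zero_le_one, Or.inl (by rw [one_smul])⟩

lemma posCone_alpha : α ∈ posCone α :=
  subset_convexHull ℚ _ ⟨1, 1, zero_le_one, Or.inr (by rw [one_smul, one_pow, mul_one])⟩

lemma posCone_add {x y : K} (hx : x ∈ posCone α) (hy : y ∈ posCone α) :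
    x + y ∈ posCone α := by
  classical
  rw [mem_posCone_iff] at hx hy ⊢
  obtain ⟨ι₁, t₁, w₁, z₁, hw₁, hz₁, rfl⟩ := hx
  obtain ⟨ι₂, t₂, w₂, z₂, hw₂, hz₂, rfl⟩ := hy
  refine ⟨ι₁ ⊕ ι₂, t₁.disjSum t₂, Sum.elim w₁ w₂, Sum.elim z₁ z₂, ?_, ?_, ?_⟩
  · rintro (i | i) hi
    · exact hw₁ i (Finset.inl_mem_disjSum.1 hi)
    · exact hw₂ i (Finset.inr_mem_disjSum.1 hi)
  · rintro (i | i) hi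
    · exact hz₁ i (Finset.inl_mem_disjSum.1 hi)
    · exact hz₂ i (Finset.inr_mem_disjSum.1 hi)
  · rw [Finset.sum_disjSum]
    rfl

lemma posCone_mul {x y : K} (hx : x ∈ posCone α) (hy : y ∈ posCone α) :
    x * y ∈ posCone α := by
  classical
  rw [mem_posCone_iff] at hx hy ⊢
  obtain ⟨ι₁, t₁, w₁, z₁, hw₁, hz₁, rfl⟩ := hx
  obtain ⟨ι₂, t₂, w₂, z₂, hw₂, hz₂, rfl⟩ := hy
  refine ⟨ι₁ × ι₂, t₁ ×ˢ t₂, fun p => w₁ p.1 * w₂ p.2, fun p => z₁ p.1 * z₂ p.2, ?_, ?_, ?_⟩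
  · rintro ⟨i, j⟩ hij
    rw [Finset.mem_product] at hij
    exact mul_nonneg (hw₁ i hij.1) (hw₂ j hij.2)
  · rintro ⟨i, j⟩ hij
    rw [Finset.mem_product] at hij
    exact coneGen_mul α (hz₁ i hij.1) (hz₂ j hij.2)
  · rw [Finset.sum_mul]
    rw [Finset.sum_product]
    refine Finset.sum_congr rfl fun i _ => ?_
    rw [Finset.mul_sum]
    refine Finset.sum_congr rfl fun j _ => ?_
    rw [Rat.smul_def, Rat.smul_def, Rat.smul_def]
    push_cast
    ring

lemma posCone_omega_nonneg (ω : K →+* ℝ) (hαω : 0 < ω α) {x : K} (hx : x ∈ posCone α) :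
    0 ≤ ω x := by
  rw [mem_posCone_iff] at hx
  obtain ⟨ι, t, w, z, hw, hz, rfl⟩ := hx
  rw [map_sum]
  refine Finset.sum_nonneg fun i hi => ?_
  rw [Rat.smul_def, map_mul, map_ratCast]
  exact mul_nonneg (by exact_mod_cast hw i hi) (coneGen_omega_nonneg α ω hαω (hz i hi))

lemma posCone_neg_one (ω : K →+* ℝ) (hαω : 0 < ω α) : (-1 : K) ∉ posCone α := by
  intro h
  have := posCone_omega_nonneg α ω hαω h
  rw [map_neg, map_one] at this
  linarith

end Cone

section Rep
variable {K : Type*} [Field K] [NumberField K]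

lemma posCone_rep (α : K) {x : K} (hx : x ∈ posCone α) :
    ∃ y z : Fin (4 * (Module.finrank ℚ K + 1)) → K,
      x = (∑ i, (y i) ^ 2) + α * ∑ i, (z i) ^ 2 := by
  classical
  rw [posCone] at hx
  obtain ⟨ι, hfin, z, w, hrange, haff, hwpos, hw1, hx⟩ :=
    eq_pos_convex_span_of_mem_convexHull hx
  letI := hfin
  set d := Module.finrank ℚ K with hd
  have hcard : Fintype.card ι ≤ d + 1 :=
    haff.card_le_finrank_succ.trans (Nat.add_le_add_right (Submodule.finrank_le _) 1)
  have hzG : ∀ i, z i ∈ coneGen α := fun i => hrange (Set.mem_range_self i)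
  choose q a hq hcase using hzG
  set P : Finset ι := Finset.univ.filter (fun i => z i = q i • (a i) ^ 2) with hP
  have hsplit : x = (∑ i ∈ P, w i • z i) + ∑ i ∈ Pᶜ, w i • z i := by
    rw [Finset.sum_add_sum_compl]
    exact hx.symm
  have h1 : ∑ i ∈ P, w i • z i = ∑ i ∈ P, (w i * q i) • (a i) ^ 2 := by
    refine Finset.sum_congr rfl fun i hi => ?_
    rw [(Finset.mem_filter.1 hi).2, smul_smul]
  have h2 : ∑ i ∈ Pᶜ, w i • z i = α * ∑ i ∈ Pᶜ, (w i * q i) • (a i) ^ 2 := by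
    rw [Finset.mul_sum]
    refine Finset.sum_congr rfl fun i hi => ?_
    have hiP : z i = q i • (α * (a i) ^ 2) := by
      rcases hcase i with h | h
      · exact absurd (Finset.mem_filter.2 ⟨Finset.mem_univ i, h⟩)
          (Finset.mem_compl.1 hi)
      · exact h
    rw [hiP, smul_smul, Rat.smul_def, Rat.smul_def]
    ring
  have hS1 : IsSumSqN (4 * (d + 1)) (∑ i ∈ P, (w i * q i) • (a i) ^ 2) := by
    refine (isSumSqN_sum P _ a fun i _ => mul_nonneg (hwpos i).le (hq i)).mono ?_
    have : P.card ≤ d + 1 := (Finset.card_filter_le _ _).trans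
      ((Finset.card_univ (α := ι)) ▸ hcard)
    omega
  have hS2 : IsSumSqN (4 * (d + 1)) (∑ i ∈ Pᶜ, (w i * q i) • (a i) ^ 2) := by
    refine (isSumSqN_sum Pᶜ _ a fun i _ => mul_nonneg (hwpos i).le (hq i)).mono ?_
    have : Pᶜ.card ≤ d + 1 := (Finset.card_le_univ _).trans
      ((Finset.card_univ (α := ι)) ▸ hcard)
    omega
  obtain ⟨y1, hy1⟩ := hS1
  obtain ⟨y2, hy2⟩ := hS2
  exact ⟨y1, y2, by rw [hsplit, h1, h2, hy1, hy2]⟩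

end Rep

theorem positives_at_real_embedding_isDiophantine' (K : Type*) [Field K] [NumberField K]
    (ω : K →+* ℝ) :
    ∃ (n : ℕ) (g : MvPolynomial (Fin 1 ⊕ Fin n) K),
      ∀ a : Fin 1 → K, (a 0 ≠ 0 ∧ 0 < ω (a 0)) ↔
        ∃ r : Fin n → K, MvPolynomial.eval (Sum.elim a r) g = 0 := by
  classical
  obtain ⟨α, hαω, hαother⟩ := exists_alpha ω
  set N := 4 * (Module.finrank ℚ K + 1) with hN
  set e : Fin (N + (N + 1)) ≃ (Fin N ⊕ (Fin N ⊕ Fin 1)) :=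
    finSumFinEquiv.symm.trans (Equiv.sumCongr (Equiv.refl (Fin N)) finSumFinEquiv.symm) with he
  set g' : MvPolynomial (Fin 1 ⊕ (Fin N ⊕ (Fin N ⊕ Fin 1))) K :=
    (MvPolynomial.X (Sum.inl 0) - (∑ i : Fin N, (MvPolynomial.X (Sum.inr (Sum.inl i))) ^ 2)
        - MvPolynomial.C α * ∑ i : Fin N, (MvPolynomial.X (Sum.inr (Sum.inr (Sum.inl i)))) ^ 2) ^ 2
      + (MvPolynomial.X (Sum.inl 0) * MvPolynomial.X (Sum.inr (Sum.inr (Sum.inr 0))) - 1) ^ 2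
    with hg'
  refine ⟨N + (N + 1), MvPolynomial.rename (Sum.map id ⇑e.symm) g', fun a => ?_⟩
  have heval : ∀ b : (Fin N ⊕ (Fin N ⊕ Fin 1)) → K,
      MvPolynomial.eval (Sum.elim a b) g' =
        (a 0 - (∑ i : Fin N, (b (Sum.inl i)) ^ 2)
          - α * ∑ i : Fin N, (b (Sum.inr (Sum.inl i))) ^ 2) ^ 2
        + (a 0 * b (Sum.inr (Sum.inr 0)) - 1) ^ 2 := by
    intro b
    simp [hg']
  have hrw : ∀ r : Fin (N + (N + 1)) → K,
      MvPolynomial.eval (Sum.elim a r) (MvPolynomial.rename (Sum.map id ⇑e.symm) g') =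
        MvPolynomial.eval (Sum.elim a (r ∘ ⇑e.symm)) g' := by
    intro r
    rw [MvPolynomial.eval_rename]
    congr 1
    rw [Sum.elim_comp_map]
    rfl
  constructor
  · rintro ⟨hne, hpos⟩
    set x := a 0 with hx
    have hxC : x ∈ posCone α := by
      by_contra hxC
      obtain ⟨ρ, hρC, hρx⟩ := exists_real_embedding_of_not_mem (posCone α)
        (posCone_sq α) (fun _ _ h h' => posCone_add α h h')
        (fun _ _ h h' => posCone_mul α h h') (posCone_neg_one α ω hαω) x hxC
      have hρω : ρ = ω := by
        by_contra hne'
        exact absurd (hρC α (posCone_alpha α)) (not_le.2 (hαother ρ hne'))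
      rw [hρω] at hρx
      linarith
    obtain ⟨y, z, hyz⟩ := posCone_rep α hxC
    set s : (Fin N ⊕ (Fin N ⊕ Fin 1)) → K :=
      Sum.elim y (Sum.elim z (fun _ => x⁻¹)) with hs
    refine ⟨s ∘ ⇑e, ?_⟩
    rw [hrw]
    have hse : (s ∘ ⇑e) ∘ ⇑e.symm = s := by
      funext v
      simp
    rw [hse, heval]
    simp only [hs, Sum.elim_inl, Sum.elim_inr]
    have hyz2 : x = (∑ i : Fin N, y i ^ 2) + α * ∑ i : Fin N, z i ^ 2 := hyz
    have hA0 : x - (∑ i : Fin N, y i ^ 2) - α * ∑ i : Fin N, z i ^ 2 = 0 := by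
      rw [hyz2]; ring
    rw [hA0, mul_inv_cancel₀ hne]
    ring
  · rintro ⟨r, hr⟩
    rw [hrw, heval] at hr
    set b := r ∘ ⇑e.symm with hb
    set A : K := a 0 - (∑ i : Fin N, (b (Sum.inl i)) ^ 2)
      - α * ∑ i : Fin N, (b (Sum.inr (Sum.inl i))) ^ 2 with hA
    set B : K := a 0 * b (Sum.inr (Sum.inr 0)) - 1 with hB
    have hωAB : ω A ^ 2 + ω B ^ 2 = 0 := by
      have := congrArg ω hr
      rw [map_add, map_pow, map_pow, map_zero] at this
      exact this
    have hA0 : A = 0 := by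
      have h1 : ω A ^ 2 = 0 := le_antisymm (by nlinarith [sq_nonneg (ω B)]) (sq_nonneg _)
      have h2 : ω A = 0 := by
        have := sq_eq_zero_iff.1 h1
        exact this
      exact ω.injective (by rw [h2, map_zero])
    have hB0 : B = 0 := by
      have h1 : ω B ^ 2 = 0 := le_antisymm (by nlinarith [sq_nonneg (ω A)]) (sq_nonneg _)
      have h2 : ω B = 0 := sq_eq_zero_iff.1 h1
      exact ω.injective (by rw [h2, map_zero])
    have hmul1 : a 0 * b (Sum.inr (Sum.inr 0)) = 1 := by
      rw [hB] at hB0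
      linear_combination hB0
    have hne : a 0 ≠ 0 := left_ne_zero_of_mul_eq_one hmul1
    refine ⟨hne, ?_⟩
    have hrep : a 0 = (∑ i : Fin N, (b (Sum.inl i)) ^ 2)
        + α * ∑ i : Fin N, (b (Sum.inr (Sum.inl i))) ^ 2 := by
      rw [hA] at hA0
      linear_combination hA0
    have hnonneg : 0 ≤ ω (a 0) := by
      rw [hrep, map_add, map_mul, map_sum, map_sum]
      refine add_nonneg (Finset.sum_nonneg fun i _ => ?_) (mul_nonneg hαω.le
        (Finset.sum_nonneg fun i _ => ?_))
      · rw [map_pow]; exact sq_nonneg _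
      · rw [map_pow]; exact sq_nonneg _
    rcases hnonneg.lt_or_eq with h | h
    · exact h
    · exact absurd (ω.injective (by rw [← h, map_zero])) hne

/-- A set `A ⊆ K^m` is diophantine over a field `K`: there are `n ∈ ℕ` and a polynomial
`g ∈ K[x₁,…,x_m,y₁,…,y_n]` such that `a ∈ A` iff `g(a,r) = 0` for some `r ∈ K^n`. -/
def IsDiophantine {K : Type*} [Field K] {m : ℕ} (A : Set (Fin m → K)) : Prop :=
  ∃ (n : ℕ) (g : MvPolynomial (Fin m ⊕ Fin n) K),
    ∀ a : Fin m → K, a ∈ A ↔ ∃ r : Fin n → K, MvPolynomial.eval (Sum.elim a r) g = 0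

/-- **Lemma.** Let `K` be a number field and `ω : K → ℝ` a real embedding. Then
`K_ω^× = {x ∈ K^× : ω(x) > 0}` is diophantine over `K`. -/
theorem positives_at_real_embedding_isDiophantine (K : Type*) [Field K] [NumberField K]
    (ω : K →+* ℝ) :
    IsDiophantine {f : Fin 1 → K | f 0 ≠ 0 ∧ 0 < ω (f 0)} := by
  obtain ⟨n, g, hg⟩ := positives_at_real_embedding_isDiophantine' K ω
  exact ⟨n, g, fun a => hg a⟩
end

section
/- Let K be a number field. Then the set {x ∈ K^× : x is not totally positive}, i.e. the set of nonzero x ∈ K for which there exists a real embedding ω : K → ℝ with ω(x) < 0, is diophantine over K. -/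
namespace NotTotPosAux

variable {K : Type*} [Field K]

theorem _root_.IsSumSq.map {R S : Type*} [CommRing R] [CommRing S] (f : R →+* S) {x : R}
    (h : IsSumSq x) : IsSumSq (f x) := by
  induction h with
  | zero => simpa using IsSumSq.zero
  | @sq_add a s _ ih =>
      rw [map_add, map_mul]
      exact IsSumSq.sq_add (f a) ih

theorem _root_.IsSumSq.mul_self_mul {R : Type*} [CommRing R] (x : R) {b : R} (hb : IsSumSq b) :
    IsSumSq (x * x * b) := by
  induction hb with
  | zero => simpa using IsSumSq.zero
  | @sq_add a s _ ih =>
      have : x * x * (a * a + s) = (x * a) * (x * a) + x * x * s := by ring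
      rw [this]
      exact IsSumSq.sq_add _ ih

/-- A preordering on a field. -/
structure IsPreordering (P : Set K) : Prop where
  sq_mem : ∀ x : K, x * x ∈ P
  add_mem : ∀ {a b}, a ∈ P → b ∈ P → a + b ∈ P
  mul_mem : ∀ {a b}, a ∈ P → b ∈ P → a * b ∈ P
  neg_one_notMem : (-1 : K) ∉ P

namespace IsPreordering

variable {P : Set K} (hP : IsPreordering P)
include hP

theorem zero_mem : (0 : K) ∈ P := by simpa using hP.sq_mem 0
theorem one_mem : (1 : K) ∈ P := by simpa using hP.sq_mem 1

/-- If `a*t ∈ P` with `t ∈ P`, `t ≠ 0`, then `a ∈ P`. -/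
theorem mem_of_mul_mem {a t : K} (h : a * t ∈ P) (ht : t ∈ P) (ht0 : t ≠ 0) : a ∈ P := by
  have : a = (a * t) * t * (t⁻¹ * t⁻¹) := by field_simp
  rw [this]
  exact hP.mul_mem (hP.mul_mem h ht) (hP.sq_mem t⁻¹)

/-- Extending a preordering by an element `-a` for `a ∉ P`. -/
theorem extend {a : K} (ha : a ∉ P) :
    IsPreordering {x : K | ∃ s ∈ P, ∃ t ∈ P, x = s - a * t} := by
  constructor
  · intro x
    exact ⟨x * x, hP.sq_mem x, 0, hP.zero_mem, by ring⟩
  · rintro _ _ ⟨s, hs, t, ht, rfl⟩ ⟨s', hs', t', ht', rfl⟩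
    exact ⟨s + s', hP.add_mem hs hs', t + t', hP.add_mem ht ht', by ring⟩
  · rintro _ _ ⟨s, hs, t, ht, rfl⟩ ⟨s', hs', t', ht', rfl⟩
    refine ⟨s * s' + (a * a) * (t * t'), hP.add_mem (hP.mul_mem hs hs')
      (hP.mul_mem (hP.sq_mem a) (hP.mul_mem ht ht')), s * t' + s' * t,
      hP.add_mem (hP.mul_mem hs ht') (hP.mul_mem hs' ht), by ring⟩
  · rintro ⟨s, hs, t, ht, hst⟩
    rcases eq_or_ne t 0 with rfl | ht0
    · refine hP.neg_one_notMem ?_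
      simp only [mul_zero, sub_zero] at hst
      rw [hst]; exact hs
    · refine ha (hP.mem_of_mul_mem (t := t) ?_ ht ht0)
      have : a * t = 1 + s := by linear_combination hst
      rw [this]
      exact hP.add_mem hP.one_mem hs

theorem subset_extend {a : K} : P ⊆ {x : K | ∃ s ∈ P, ∃ t ∈ P, x = s - a * t} := by
  intro x hx
  exact ⟨x, hx, 0, hP.zero_mem, by ring⟩

end IsPreordering

/-- Zorn: any preordering is contained in a maximal one, which is total with trivial support. -/
theorem exists_ordering {P₀ : Set K} (h₀ : IsPreordering P₀) :
    ∃ M : Set K, P₀ ⊆ M ∧ IsPreordering M ∧ (∀ a : K, a ∈ M ∨ -a ∈ M) ∧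
      (∀ a : K, a ∈ M → -a ∈ M → a = 0) := by
  obtain ⟨M, hM₀, hmax⟩ := zorn_subset_nonempty {P : Set K | IsPreordering P}
    (fun c hc hchain hne => by
      refine ⟨⋃₀ c, ?_, fun s hs => Set.subset_sUnion_of_mem hs⟩
      obtain ⟨Q, hQ⟩ := hne
      constructor
      · intro x
        exact Set.mem_sUnion.2 ⟨Q, hQ, (hc hQ).sq_mem x⟩
      · rintro a b ⟨A, hA, haA⟩ hb
        obtain ⟨B, hB, hbB⟩ := hb
        rcases hchain.total hA hB with hAB | hBA
        · exact ⟨B, hB, (hc hB).add_mem (hAB haA) hbB⟩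
        · exact ⟨A, hA, (hc hA).add_mem haA (hBA hbB)⟩
      · rintro a b ⟨A, hA, haA⟩ ⟨B, hB, hbB⟩
        rcases hchain.total hA hB with hAB | hBA
        · exact ⟨B, hB, (hc hB).mul_mem (hAB haA) hbB⟩
        · exact ⟨A, hA, (hc hA).mul_mem haA (hBA hbB)⟩
      · rintro ⟨A, hA, hnA⟩
        exact (hc hA).neg_one_notMem hnA) P₀ h₀
  have hM : IsPreordering M := hmax.prop
  have htot : ∀ a : K, a ∈ M ∨ -a ∈ M := by
    intro a
    by_cases haM : a ∈ M
    · exact Or.inl haM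
    · right
      have hext := hM.extend haM
      have : M = {x : K | ∃ s ∈ M, ∃ t ∈ M, x = s - a * t} :=
        hmax.eq_of_subset hext (hM.subset_extend)
      rw [this]
      exact ⟨0, hM.zero_mem, 1, hM.one_mem, by ring⟩
  refine ⟨M, hM₀, hM, htot, fun a haM hnaM => ?_⟩
  by_contra ha0
  refine hM.neg_one_notMem ?_
  have : (-1 : K) = (a * -a) * (a⁻¹ * a⁻¹) := by field_simp
  rw [this]
  exact hM.mul_mem (hM.mul_mem haM hnaM) (hM.sq_mem a⁻¹)


theorem not_isSumSq_neg_one (ω₀ : K →+* ℝ) : ¬ IsSumSq (-1 : K) := by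
  intro h
  have h2 : IsSumSq (ω₀ (-1)) := IsSumSq.map ω₀ h
  rw [map_neg, map_one] at h2
  exact absurd h2.nonneg (by norm_num)

/-- An ordered field all of whose elements satisfy monic rational polynomials is archimedean. -/
theorem arch_of_algebraic {F : Type*} [Field F] [LinearOrder F] [IsStrictOrderedRing F]
    (hpoly : ∀ x : F, ∃ p : Polynomial ℚ,
      p.Monic ∧ Polynomial.eval₂ (Rat.castHom F) x p = 0) : Archimedean F := by
  rw [archimedean_iff_nat_le]
  intro x
  obtain ⟨p, hm, hev⟩ := hpoly x
  set n := p.natDegree with hn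
  rcases Nat.eq_zero_or_pos n with hn0 | hnpos
  · exfalso
    have hp1 : p = 1 := hm.natDegree_eq_zero.mp hn0
    rw [hp1] at hev
    simpa using hev
  set A : ℚ := ∑ i ∈ Finset.range n, |p.coeff i| with hA
  have hA0 : 0 ≤ A := Finset.sum_nonneg fun i _ => abs_nonneg _
  have hbound : x ≤ ((A + 1 : ℚ) : F) := by
    by_contra hcon
    push_neg at hcon
    have hx1 : (1 : F) ≤ x := by
      refine le_of_lt (lt_of_le_of_lt ?_ hcon)
      have : (1 : ℚ) ≤ A + 1 := by linarith
      exact_mod_cast this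
    have hxpos : (0 : F) < x := lt_of_lt_of_le zero_lt_one hx1
    have hev' : ∑ i ∈ Finset.range (n + 1), ((p.coeff i : ℚ) : F) * x ^ i = 0 := by
      rw [Polynomial.eval₂_eq_sum_range] at hev
      simpa using hev
    have hxn : x ^ n = -∑ i ∈ Finset.range n, ((p.coeff i : ℚ) : F) * x ^ i := by
      have := hev'
      rw [Finset.sum_range_succ] at this
      have hcn : p.coeff n = 1 := hm.coeff_natDegree
      rw [hcn] at this
      push_cast at this
      linarith
    have hle : x ^ n ≤ ((A : ℚ) : F) * x ^ (n - 1) := by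
      rw [hxn]
      have h1 : ∀ i ∈ Finset.range n,
          -(((p.coeff i : ℚ) : F) * x ^ i) ≤ ((|p.coeff i| : ℚ) : F) * x ^ (n - 1) := by
        intro i hi
        rw [Finset.mem_range] at hi
        rw [neg_mul_eq_neg_mul]
        refine mul_le_mul ?_ ?_ (pow_nonneg hxpos.le _) ?_
        · exact_mod_cast neg_le_abs (p.coeff i)
        · exact pow_le_pow_right₀ hx1 (by omega)
        · exact_mod_cast abs_nonneg (p.coeff i)
      calc -∑ i ∈ Finset.range n, ((p.coeff i : ℚ) : F) * x ^ i
          = ∑ i ∈ Finset.range n, -(((p.coeff i : ℚ) : F) * x ^ i) := by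
            rw [← Finset.sum_neg_distrib]
        _ ≤ ∑ i ∈ Finset.range n, ((|p.coeff i| : ℚ) : F) * x ^ (n - 1) :=
            Finset.sum_le_sum h1
        _ = ((A : ℚ) : F) * x ^ (n - 1) := by
            rw [← Finset.sum_mul, hA]
            push_cast
            ring
    have hpow : (0 : F) < x ^ (n - 1) := pow_pos hxpos _
    have h2 : ((A : ℚ) : F) * x ^ (n - 1) < x * x ^ (n - 1) := by
      refine mul_lt_mul_of_pos_right ?_ hpow
      refine lt_of_le_of_lt ?_ hcon
      exact_mod_cast (by linarith : (A : ℚ) ≤ A + 1)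
    have h3 : x * x ^ (n - 1) = x ^ n := by
      rw [← pow_succ']
      congr 1
      omega
    exact absurd (hle.trans_lt (h2.trans_eq h3)) (lt_irrefl _)
  obtain ⟨N, hN⟩ : ∃ N : ℕ, (A + 1 : ℚ) ≤ N := ⟨⌈A + 1⌉₊, Nat.le_ceil _⟩
  refine ⟨N, hbound.trans ?_⟩
  have : ((A + 1 : ℚ) : F) ≤ ((N : ℚ) : F) := by exact_mod_cast hN
  simpa using this

theorem exists_embedding_of_ordering [NumberField K] {M : Set K} (hM : IsPreordering M)
    (htot : ∀ a : K, a ∈ M ∨ -a ∈ M) (hsupp : ∀ a : K, a ∈ M → -a ∈ M → a = 0) :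
    ∃ ω : K →+* ℝ, ∀ a ∈ M, 0 ≤ ω a := by
  have hpoly : ∀ x : K, ∃ p : Polynomial ℚ,
      p.Monic ∧ Polynomial.eval₂ (Rat.castHom K) x p = 0 := by
    intro x
    obtain ⟨p, hm, hev⟩ := IsIntegral.of_finite ℚ x
    refine ⟨p, hm, ?_⟩
    have : (algebraMap ℚ K) = Rat.castHom K := by
      ext q
      exact eq_ratCast _ q
    rwa [this] at hev
  letI lin : LinearOrder K :=
    { le := fun a b => b - a ∈ M
      lt := fun a b => b - a ∈ M ∧ a - b ∉ M
      le_refl := fun a => by simpa using hM.zero_mem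
      le_trans := fun a b c hab hbc => by
        have h := hM.add_mem hbc hab
        have : c - b + (b - a) = c - a := by ring
        rwa [this] at h
      lt_iff_le_not_ge := fun a b => Iff.rfl
      le_antisymm := fun a b h1 h2 => by
        have h3 : b - a ∈ M := h1
        have h4 : -(b - a) ∈ M := by
          have h2' : a - b ∈ M := h2
          have : a - b = -(b - a) := by ring
          rwa [this] at h2'
        have := hsupp _ h3 h4
        exact (sub_eq_zero.mp this).symm
      le_total := fun a b => by
        rcases htot (b - a) with h | h
        · exact Or.inl h
        · right
          have : -(b - a) = a - b := by ring
          rwa [this] at h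
      toDecidableLE := fun _ _ => Classical.propDecidable _ }
  haveI : IsOrderedAddMonoid K :=
    { add_le_add_left := fun a b hab c => by
        show b + c - (a + c) ∈ M
        have : b + c - (a + c) = b - a := by ring
        rwa [this] }
  haveI : ZeroLEOneClass K :=
    { zero_le_one := by
        show (1 : K) - 0 ∈ M
        simpa using hM.one_mem }
  haveI : IsStrictOrderedRing K := IsStrictOrderedRing.of_mul_pos (fun a b ha hb => by
        obtain ⟨ha1, ha2⟩ := ha
        obtain ⟨hb1, hb2⟩ := hb
        rw [sub_zero] at ha1 hb1
        rw [zero_sub] at ha2 hb2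
        constructor
        · rw [sub_zero]
          exact hM.mul_mem ha1 hb1
        · rw [zero_sub]
          intro hab
          have hab' : a * b ∈ M := hM.mul_mem ha1 hb1
          have := hsupp _ hab' hab
          rcases mul_eq_zero.mp this with rfl | rfl
          · exact ha2 (by simpa using hM.zero_mem)
          · exact hb2 (by simpa using hM.zero_mem))
  haveI : Archimedean K := arch_of_algebraic hpoly
  let Ω := LinearOrderedField.inducedOrderRingHom K ℝ
  refine ⟨Ω.toRingHom, fun a ha => ?_⟩
  have h0 : (0 : K) ≤ a := by
    show a - 0 ∈ M
    simpa using ha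
  have := Ω.monotone' h0
  simpa using this

/-- Artin: an element positive under every real embedding is a sum of squares. -/
theorem isSumSq_of_totPos [NumberField K] (ω₀ : K →+* ℝ) {z : K}
    (hz : ∀ ω : K →+* ℝ, 0 < ω z) : IsSumSq z := by
  by_contra hns
  have hP₀ : IsPreordering {x : K | ∃ s t : K, IsSumSq s ∧ IsSumSq t ∧ x = s - z * t} := by
    constructor
    · intro x
      exact ⟨x * x + 0, 0, IsSumSq.sq_add x .zero, .zero, by ring⟩
    · rintro a b ⟨s, t, hs, ht, rfl⟩ ⟨s', t', hs', ht', rfl⟩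
      exact ⟨s + s', t + t', hs.add hs', ht.add ht', by ring⟩
    · rintro a b ⟨s, t, hs, ht, rfl⟩ ⟨s', t', hs', ht', rfl⟩
      refine ⟨s * s' + z * z * (t * t'), s * t' + s' * t,
        (hs.mul hs').add (IsSumSq.mul_self_mul z (ht.mul ht')),
        (hs.mul ht').add (hs'.mul ht), by ring⟩
    · rintro ⟨s, t, hs, ht, hst⟩
      rcases eq_or_ne t 0 with rfl | ht0
      · refine not_isSumSq_neg_one ω₀ ?_
        have : (-1 : K) = s := by linear_combination hst
        rwa [this]
      · refine hns ?_
        have hz' : z = (t⁻¹ * t⁻¹) * ((1 + s) * t) := by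
          field_simp
          linear_combination hst
        have h1s : IsSumSq (1 + s) := by
          have := IsSumSq.sq_add 1 hs
          rwa [one_mul] at this
        rw [hz']
        exact IsSumSq.mul_self_mul t⁻¹ (h1s.mul ht)
  obtain ⟨M, hsub, hM, htot, hsupp⟩ := exists_ordering hP₀
  obtain ⟨ω, hω⟩ := exists_embedding_of_ordering hM htot hsupp
  have hzM : -z ∈ M := by
    refine hsub ⟨0, (1 : K), .zero, ?_, by ring⟩
    have h1 : (1 : K) = 1 * 1 + 0 := by ring
    rw [h1]
    exact IsSumSq.sq_add 1 .zero
  have h0 := hω _ hzM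
  rw [map_neg] at h0
  linarith [hz ω]

theorem isSumSq_fin_rep {z : K} (h : IsSumSq z) :
    ∃ (k : ℕ) (f : Fin k → K), z = ∑ i, f i * f i := by
  induction h with
  | zero => exact ⟨0, fun i => 0, by simp⟩
  | @sq_add a s hs ih =>
      obtain ⟨k, f, rfl⟩ := ih
      refine ⟨k + 1, Fin.cons a f, ?_⟩
      rw [Fin.sum_univ_succ]
      simp

open Module in
theorem rep_of_isSumSq [NumberField K] {z : K} (h : IsSumSq z) :
    ∃ (q : Fin (finrank ℚ K + 1) → ℚ) (w : Fin (finrank ℚ K + 1) → K),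
      (∀ j, 0 ≤ q j) ∧ z = ∑ j, (q j : K) * w j ^ 2 := by
  obtain ⟨k, f, rfl⟩ := isSumSq_fin_rep h
  rcases Nat.eq_zero_or_pos k with rfl | hk
  · exact ⟨0, 0, fun j => le_refl 0, by simp⟩
  have hk0 : ((k : ℚ)) ≠ 0 := by positivity
  set S : Set K := {x : K | ∃ a : K, x = a * a} with hS
  have hmem : (k : ℚ)⁻¹ • (∑ i, f i * f i) ∈ convexHull ℚ S := by
    have hcm := Finset.centerMass_mem_convexHull (t := (Finset.univ : Finset (Fin k)))
      (w := fun _ => (1 : ℚ)) (z := fun i => f i * f i) (s := S)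
      (fun i _ => zero_le_one) (by simpa using by positivity)
      (fun i _ => ⟨f i, rfl⟩)
    simpa [Finset.centerMass, Finset.card_univ] using hcm
  obtain ⟨ι, hfin, zf, wf, hrange, haff, hwpos, hwsum, hrep⟩ :=
    eq_pos_convex_span_of_mem_convexHull hmem
  letI := hfin
  have hcard : Fintype.card ι ≤ finrank ℚ K + 1 := by
    have h1 := haff.card_le_finrank_succ
    have h2 : finrank ℚ (vectorSpan ℚ (Set.range zf)) ≤ finrank ℚ K :=
      Submodule.finrank_le _
    omega
  obtain ⟨g⟩ : Nonempty (ι ↪ Fin (finrank ℚ K + 1)) :=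
    Function.Embedding.nonempty_iff_card_le.mpr (by simpa using hcard)
  have hsq : ∀ i : ι, ∃ a : K, zf i = a * a := fun i => hrange ⟨i, rfl⟩
  choose A hA using hsq
  classical
  refine ⟨fun j => if h : ∃ i, g i = j then (k : ℚ) * wf h.choose else 0,
    fun j => if h : ∃ i, g i = j then A h.choose else 0, ?_, ?_⟩
  · intro j
    by_cases h : ∃ i, g i = j
    · simp only [dif_pos h]
      have h1 := (hwpos h.choose).le
      have h2 : (0:ℚ) ≤ (k:ℚ) := by positivity
      exact mul_nonneg h2 h1
    · simp only [dif_neg h]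
      exact le_refl 0
  · have hz : (∑ i, f i * f i) = ∑ i : ι, ((k : ℚ) * wf i : ℚ) • zf i := by
      have h1 : (∑ i, f i * f i) = (k : ℚ) • ((k : ℚ)⁻¹ • (∑ i, f i * f i)) := by
        rw [smul_smul, mul_inv_cancel₀ hk0, one_smul]
      rw [h1, ← hrep, Finset.smul_sum]
      simp [smul_smul]
    rw [hz]
    rw [← Finset.sum_subset (Finset.subset_univ (Finset.univ.map g))]
    · rw [Finset.sum_map]
      refine Finset.sum_congr rfl fun i _ => ?_
      have hex : ∃ i', g i' = g i := ⟨i, rfl⟩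
      have hch : hex.choose = i := g.injective hex.choose_spec
      simp only [Function.Embedding.coeFn_mk, dif_pos hex, hch]
      rw [Rat.smul_def, hA]
      push_cast
      ring
    · intro j _ hj
      have : ¬ ∃ i, g i = j := by
        intro ⟨i, hi⟩
        exact hj (Finset.mem_map.mpr ⟨i, Finset.mem_univ i, hi⟩)
      simp [dif_neg this]

theorem rat_sq4 {q : ℚ} (hq : 0 ≤ q) : ∃ b : Fin 4 → ℚ, q = ∑ l, (b l) ^ 2 := by
  obtain ⟨a, b, c, d, h⟩ := Nat.sum_four_squares (q.num.toNat * q.den)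
  refine ⟨![(a : ℚ) / q.den, (b : ℚ) / q.den, (c : ℚ) / q.den, (d : ℚ) / q.den], ?_⟩
  rw [Fin.sum_univ_four]
  simp only [Matrix.cons_val_zero, Matrix.cons_val_one, Matrix.head_cons,
    Matrix.cons_val_two, Matrix.tail_cons, Matrix.cons_val_three]
  have hden : (q.den : ℚ) ≠ 0 := by
    exact_mod_cast q.den_pos.ne'
  have key : ((a ^ 2 + b ^ 2 + c ^ 2 + d ^ 2 : ℕ) : ℚ) = (q.num.toNat : ℚ) * (q.den : ℚ) := by
    exact_mod_cast congrArg (fun n : ℕ => (n : ℚ)) h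
  have hnum : (q.num.toNat : ℚ) = (q.num : ℚ) := by
    exact_mod_cast Int.toNat_of_nonneg (Rat.num_nonneg.mpr hq)
  have hqd : (q.num : ℚ) = q * (q.den : ℚ) := by
    exact (div_eq_iff hden).mp (Rat.num_div_den q)
  push_cast at key
  rw [hnum, hqd] at key
  field_simp
  linarith [key]

open Module in
theorem totPos_rep [NumberField K] (ω₀ : K →+* ℝ) {z : K} (hz : ∀ ω : K →+* ℝ, 0 < ω z) :
    ∃ (a : K) (u : Fin ((finrank ℚ K + 1) * 4) → K), a ≠ 0 ∧ z = a ^ 2 + ∑ i, u i ^ 2 := by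
  have hne : Nonempty (K →+* ℝ) := ⟨ω₀⟩
  have hune : (Finset.univ : Finset (K →+* ℝ)).Nonempty := Finset.univ_nonempty
  set μ := Finset.univ.inf' hune (fun ω : K →+* ℝ => ω z) with hμ
  have hμpos : 0 < μ := by
    rw [hμ, Finset.lt_inf'_iff]
    exact fun ω _ => hz ω
  obtain ⟨ρ, hρ0, hρμ⟩ := exists_rat_btwn (show (0 : ℝ) < Real.sqrt μ from
    Real.sqrt_pos.mpr hμpos)
  have hρpos : (0 : ℚ) < ρ := by exact_mod_cast hρ0
  have hρsq : ((ρ ^ 2 : ℚ) : ℝ) < μ := by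
    have h1 : ((ρ : ℝ)) ^ 2 < (Real.sqrt μ) ^ 2 := by
      have := hρ0.le
      nlinarith
    rw [Real.sq_sqrt hμpos.le] at h1
    push_cast
    exact h1
  set z' := z - ((ρ ^ 2 : ℚ) : K) with hz'def
  have hz'pos : ∀ ω : K →+* ℝ, 0 < ω z' := by
    intro ω
    rw [hz'def, map_sub, map_ratCast]
    have h2 : μ ≤ ω z := Finset.inf'_le _ (Finset.mem_univ ω)
    linarith
  obtain ⟨q, w, hq, hrep⟩ := rep_of_isSumSq (isSumSq_of_totPos ω₀ hz'pos)
  have h4 : ∀ j, ∃ b : Fin 4 → ℚ, q j = ∑ l, (b l) ^ 2 := fun j => rat_sq4 (hq j)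
  choose b hb using h4
  refine ⟨(ρ : K), fun i => ((b (finProdFinEquiv.symm i).1 (finProdFinEquiv.symm i).2 : ℚ) : K)
    * w (finProdFinEquiv.symm i).1, ?_, ?_⟩
  · exact Rat.cast_ne_zero.mpr hρpos.ne'
  · have hsum : ∑ i : Fin ((finrank ℚ K + 1) * 4),
        (((b (finProdFinEquiv.symm i).1 (finProdFinEquiv.symm i).2 : ℚ) : K)
          * w (finProdFinEquiv.symm i).1) ^ 2
        = ∑ p : Fin (finrank ℚ K + 1) × Fin 4, (((b p.1 p.2 : ℚ) : K) * w p.1) ^ 2 := by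
      exact Equiv.sum_comp finProdFinEquiv.symm
        (fun p => (((b p.1 p.2 : ℚ) : K) * w p.1) ^ 2)
    rw [hsum, Fintype.sum_prod_type]
    have hj : ∀ j, (∑ l : Fin 4, (((b j l : ℚ) : K) * w j) ^ 2) = ((q j : ℚ) : K) * w j ^ 2 := by
      intro j
      have : (∑ l : Fin 4, (((b j l : ℚ) : K) * w j) ^ 2)
          = ((∑ l : Fin 4, (b j l) ^ 2 : ℚ) : K) * w j ^ 2 := by
        push_cast
        rw [Finset.sum_mul]
        refine Finset.sum_congr rfl fun l _ => by ring
      rw [this, ← hb j]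
    rw [Finset.sum_congr rfl (fun j _ => hj j), ← hrep, hz'def]
    push_cast
    ring

theorem exists_sign_pattern [NumberField K] (ε : (K →+* ℝ) → Bool) :
    ∃ e : K, ∀ ω : K →+* ℝ, if ε ω then 0 < ω e else ω e < 0 := by
  classical
  set V := ((K →+* ℝ) → ℝ) with hV
  set Φ : K → V := fun x => fun ω => ω x with hΦ
  have hind : LinearIndependent ℝ (fun (ω : K →+* ℝ) => ((ω : K →* ℝ) : K → ℝ)) := by
    have h1 := linearIndependent_monoidHom K ℝ
    have h2 : Function.Injective (fun (ω : K →+* ℝ) => (ω : K →* ℝ)) := by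
      intro ω1 ω2 h
      ext x
      exact congrArg (fun f : K →* ℝ => f x) h
    exact h1.comp _ h2
  have hspan : Submodule.span ℝ (Set.range Φ) = ⊤ := by
    by_contra hne
    obtain ⟨φ, hφ0, hφ⟩ := Submodule.exists_dual_map_eq_bot_of_lt_top
      (p := Submodule.span ℝ (Set.range Φ)) (lt_top_iff_ne_top.mpr hne) inferInstance
    have hvanish : ∀ x : K, φ (Φ x) = 0 := by
      intro x
      have hx : Φ x ∈ Submodule.span ℝ (Set.range Φ) := Submodule.subset_span ⟨x, rfl⟩
      have hmem : φ (Φ x) ∈ Submodule.map φ (Submodule.span ℝ (Set.range Φ)) :=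
        Submodule.mem_map_of_mem hx
      rw [hφ] at hmem
      simpa using hmem
    set c : (K →+* ℝ) → ℝ := fun ω => φ (fun j => if ω = j then 1 else 0) with hc
    have hrepφ : ∀ v : V, φ v = ∑ ω, v ω * c ω := by
      intro v
      conv_lhs => rw [pi_eq_sum_univ v]
      rw [map_sum]
      refine Finset.sum_congr rfl fun ω _ => ?_
      rw [map_smul, smul_eq_mul]
    have hcomb : (∑ ω : K →+* ℝ, c ω • ((ω : K →* ℝ) : K → ℝ)) = 0 := by
      funext x
      have h3 := hvanish x
      rw [hrepφ (Φ x)] at h3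
      simpa [mul_comm] using h3
    have hzero := Fintype.linearIndependent_iff.mp hind c hcomb
    refine hφ0 (LinearMap.ext fun v => ?_)
    rw [hrepφ v]
    simp [hzero]
  set y : V := fun ω => if ε ω then (1 : ℝ) else -1 with hy
  have hy_mem : y ∈ Submodule.span ℝ (Set.range Φ) := by rw [hspan]; trivial
  rw [Submodule.mem_span_set] at hy_mem
  obtain ⟨cf, hsupp, hsum⟩ := hy_mem
  set xv : V → K := fun v => if h : ∃ x : K, Φ x = v then h.choose else 0 with hxv
  have hxv_spec : ∀ v ∈ cf.support, Φ (xv v) = v := by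
    intro v hv
    have hvr : v ∈ Set.range Φ := hsupp hv
    obtain ⟨x, hx⟩ := hvr
    have hex : ∃ x : K, Φ x = v := ⟨x, hx⟩
    simp only [hxv, dif_pos hex]
    exact hex.choose_spec
  set bound : V → ℝ := fun v => ∑ ω : K →+* ℝ, |v ω| with hbound
  have hbound_nonneg : ∀ v, 0 ≤ bound v := fun v => Finset.sum_nonneg fun ω _ => abs_nonneg _
  have hbound_le : ∀ (v : V) (ω : K →+* ℝ), |v ω| ≤ bound v := by
    intro v ω
    exact Finset.single_le_sum (f := fun ω => |v ω|) (fun i _ => abs_nonneg _)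
      (Finset.mem_univ ω)
  set B : ℝ := 1 + ∑ v ∈ cf.support, bound v with hB
  have hBpos : 0 < B := by
    rw [hB]
    have := Finset.sum_nonneg (fun v (_ : v ∈ cf.support) => hbound_nonneg v)
    linarith
  have hq : ∀ v : V, ∃ q : ℚ, |cf v - (q : ℝ)| < B⁻¹ := fun v =>
    exists_rat_near (cf v) (inv_pos.mpr hBpos)
  choose qv hqv using hq
  refine ⟨∑ v ∈ cf.support, ((qv v : ℚ) : K) * xv v, ?_⟩
  intro ω
  have hωe : ω (∑ v ∈ cf.support, ((qv v : ℚ) : K) * xv v)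
      = ∑ v ∈ cf.support, (qv v : ℝ) * v ω := by
    rw [map_sum]
    refine Finset.sum_congr rfl fun v hv => ?_
    rw [map_mul, map_ratCast]
    congr 1
    have := hxv_spec v hv
    exact congrFun this ω
  have hyω : y ω = ∑ v ∈ cf.support, cf v * v ω := by
    have h4 := congrFun hsum ω
    rw [← h4, Finsupp.sum, Finset.sum_apply]
    refine Finset.sum_congr rfl fun v hv => ?_
    rfl
  have hdiff : |ω (∑ v ∈ cf.support, ((qv v : ℚ) : K) * xv v) - y ω| < 1 := by
    rw [hωe, hyω, ← Finset.sum_sub_distrib]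
    calc |∑ v ∈ cf.support, ((qv v : ℝ) * v ω - cf v * v ω)|
        ≤ ∑ v ∈ cf.support, |(qv v : ℝ) * v ω - cf v * v ω| := Finset.abs_sum_le_sum_abs _ _
      _ ≤ ∑ v ∈ cf.support, B⁻¹ * bound v := by
          refine Finset.sum_le_sum fun v _ => ?_
          have h5 : (qv v : ℝ) * v ω - cf v * v ω = ((qv v : ℝ) - cf v) * v ω := by ring
          rw [h5, abs_mul]
          refine mul_le_mul ?_ (hbound_le v ω) (abs_nonneg _) (inv_pos.mpr hBpos).le
          rw [abs_sub_comm]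
          exact (hqv v).le
      _ = B⁻¹ * ∑ v ∈ cf.support, bound v := by rw [Finset.mul_sum]
      _ < 1 := by
          rw [inv_mul_lt_iff₀ hBpos, mul_one, hB]
          have := Finset.sum_nonneg (fun v (_ : v ∈ cf.support) => hbound_nonneg v)
          linarith
  by_cases hεω : ε ω
  · rw [if_pos hεω]
    have : y ω = 1 := by rw [hy]; simp [hεω]
    rw [this] at hdiff
    have := abs_lt.mp hdiff
    linarith [this.1]
  · rw [if_neg hεω]
    have : y ω = -1 := by rw [hy]; simp [hεω]
    rw [this] at hdiff
    have := abs_lt.mp hdiff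
    linarith [this.2]

theorem three_sq_zero (ω₀ : K →+* ℝ) {p q s : K} (h : p ^ 2 + q ^ 2 + s ^ 2 = 0) :
    p = 0 ∧ q = 0 ∧ s = 0 := by
  have h0 : ω₀ p ^ 2 + ω₀ q ^ 2 + ω₀ s ^ 2 = 0 := by
    have := congrArg ω₀ h
    simpa [map_add, map_pow] using this
  have hp : ω₀ p = 0 := by nlinarith [sq_nonneg (ω₀ p), sq_nonneg (ω₀ q), sq_nonneg (ω₀ s)]
  have hq : ω₀ q = 0 := by nlinarith [sq_nonneg (ω₀ p), sq_nonneg (ω₀ q), sq_nonneg (ω₀ s)]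
  have hs : ω₀ s = 0 := by nlinarith [sq_nonneg (ω₀ p), sq_nonneg (ω₀ q), sq_nonneg (ω₀ s)]
  refine ⟨ω₀.injective ?_, ω₀.injective ?_, ω₀.injective ?_⟩ <;> simp [hp, hq, hs]

open MvPolynomial in
set_option maxHeartbeats 1000000 in
theorem assemble [NumberField K] (ω₀ : K →+* ℝ) (N : ℕ) (E : Finset K)
    (hE : ∀ e ∈ E, ∃ ω : K →+* ℝ, ω e < 0)
    (hcover : ∀ x : K, x ≠ 0 → (∃ ω : K →+* ℝ, ω x < 0) →
      ∃ e ∈ E, ∀ ω : K →+* ℝ, 0 < ω (x * e))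
    (hrepr : ∀ z : K, (∀ ω : K →+* ℝ, 0 < ω z) →
      ∃ (A : K) (u : Fin N → K), A ≠ 0 ∧ z = A ^ 2 + ∑ i, u i ^ 2) :
    ∃ (g : MvPolynomial (Fin 1 ⊕ Fin (N + 3)) K),
      ∀ a : Fin 1 → K, (a 0 ≠ 0 ∧ ∃ ω : K →+* ℝ, ω (a 0) < 0) ↔
        ∃ r : Fin (N + 3) → K, MvPolynomial.eval (Sum.elim a r) g = 0 := by
  have haI : ∀ (v : Fin 3), (Fin.natAdd N v : Fin (N + 3)) = Fin.natAdd N v := fun _ => rfl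
  refine ⟨(∏ e ∈ E, (X (Sum.inr (Fin.natAdd N 1)) - C e)) ^ 2
      + (X (Sum.inl 0) * X (Sum.inr (Fin.natAdd N 1))
          - ((X (Sum.inr (Fin.natAdd N 0))) ^ 2
            + ∑ i : Fin N, (X (Sum.inr (Fin.castAdd 3 i))) ^ 2)) ^ 2
      + (X (Sum.inr (Fin.natAdd N 2)) * X (Sum.inr (Fin.natAdd N 0)) - 1) ^ 2, ?_⟩
  intro a
  have hg : ∀ r : Fin (N + 3) → K,
      MvPolynomial.eval (Sum.elim a r)
        ((∏ e ∈ E, (X (Sum.inr (Fin.natAdd N 1)) - C e)) ^ 2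
        + (X (Sum.inl 0) * X (Sum.inr (Fin.natAdd N 1))
            - ((X (Sum.inr (Fin.natAdd N 0))) ^ 2
              + ∑ i : Fin N, (X (Sum.inr (Fin.castAdd 3 i))) ^ 2)) ^ 2
        + (X (Sum.inr (Fin.natAdd N 2)) * X (Sum.inr (Fin.natAdd N 0)) - 1) ^ 2)
      = (∏ e ∈ E, (r (Fin.natAdd N 1) - e)) ^ 2
        + (a 0 * r (Fin.natAdd N 1)
            - (r (Fin.natAdd N 0) ^ 2 + ∑ i : Fin N, r (Fin.castAdd 3 i) ^ 2)) ^ 2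
        + (r (Fin.natAdd N 2) * r (Fin.natAdd N 0) - 1) ^ 2 := by
    intro r
    simp only [map_add, map_sub, map_mul, map_pow, map_prod, map_sum, map_one,
      MvPolynomial.eval_X, MvPolynomial.eval_C, Sum.elim_inl, Sum.elim_inr]
  constructor
  · rintro ⟨ha0, hω⟩
    obtain ⟨e, heE, hz⟩ := hcover (a 0) ha0 hω
    obtain ⟨A, u, hA0, hsum⟩ := hrepr (a 0 * e) hz
    refine ⟨Fin.append u ![A, e, A⁻¹], ?_⟩
    rw [hg]
    have h0 : Fin.append u ![A, e, A⁻¹] (Fin.natAdd N 0) = A := by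
      rw [Fin.append_right]
      rfl
    have h1 : Fin.append u ![A, e, A⁻¹] (Fin.natAdd N 1) = e := by
      rw [Fin.append_right]
      rfl
    have h2 : Fin.append u ![A, e, A⁻¹] (Fin.natAdd N 2) = A⁻¹ := by
      rw [Fin.append_right]
      rfl
    have hu : ∀ i : Fin N, Fin.append u ![A, e, A⁻¹] (Fin.castAdd 3 i) = u i := fun i =>
      Fin.append_left _ _ i
    rw [h0, h1, h2, Finset.sum_congr rfl (fun i _ => by rw [hu i])]
    rw [Finset.prod_eq_zero heE (sub_self _), ← hsum]
    simp [inv_mul_cancel₀ hA0]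
  · rintro ⟨r, hr0⟩
    rw [hg] at hr0
    obtain ⟨h1, h2, h3⟩ := three_sq_zero ω₀ hr0
    obtain ⟨e, heE, hez⟩ := Finset.prod_eq_zero_iff.mp h1
    have heq : r (Fin.natAdd N 1) = e := sub_eq_zero.mp hez
    have hA0 : r (Fin.natAdd N 0) ≠ 0 := by
      intro h0
      rw [h0, mul_zero] at h3
      simp at h3
    have h2' : a 0 * e = r (Fin.natAdd N 0) ^ 2 + ∑ i : Fin N, r (Fin.castAdd 3 i) ^ 2 := by
      rw [← heq]
      exact sub_eq_zero.mp h2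
    have hpos : ∀ ω : K →+* ℝ, 0 < ω (a 0 * e) := by
      intro ω
      rw [h2', map_add, map_pow, map_sum]
      have hωa : ω (r (Fin.natAdd N 0)) ≠ 0 := fun h => hA0 (ω.injective (by simp [h]))
      have hpos1 : 0 < ω (r (Fin.natAdd N 0)) ^ 2 := by positivity
      have hsumnn : 0 ≤ ∑ i : Fin N, ω (r (Fin.castAdd 3 i) ^ 2) := by
        refine Finset.sum_nonneg fun i _ => ?_
        rw [map_pow]
        exact sq_nonneg _
      linarith
    obtain ⟨ω₁, hω₁⟩ := hE e heE
    have hprod := hpos ω₁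
    rw [map_mul] at hprod
    have hx : ω₁ (a 0) < 0 := by nlinarith
    refine ⟨fun h0 => ?_, ⟨ω₁, hx⟩⟩
    rw [h0, map_zero] at hx
    exact lt_irrefl 0 hx

end NotTotPosAux

open NotTotPosAux in
/-- **Lemma.** Let `K` be a number field. Then the set of nonzero `x ∈ K` that are not totally
positive, i.e. such that `ω(x) < 0` for some real embedding `ω : K → ℝ`, is diophantine
over `K`. -/
theorem not_totallyPositive_isDiophantine (K : Type*) [Field K] [NumberField K] :
    IsDiophantine {f : Fin 1 → K | f 0 ≠ 0 ∧ ∃ ω : K →+* ℝ, ω (f 0) < 0} := by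
  classical
  by_cases hne : Nonempty (K →+* ℝ)
  · obtain ⟨ω₀⟩ := hne
    have hrepspec : ∀ ε : (K →+* ℝ) → Bool,
        ∀ ω : K →+* ℝ, if ε ω then 0 < ω ((exists_sign_pattern ε).choose)
          else ω ((exists_sign_pattern ε).choose) < 0 :=
      fun ε => (exists_sign_pattern ε).choose_spec
    set rep : ((K →+* ℝ) → Bool) → K := fun ε => (exists_sign_pattern ε).choose with hrep
    set bad : Finset ((K →+* ℝ) → Bool) :=
      Finset.univ.filter (fun ε => ε ≠ fun _ => true) with hbad
    obtain ⟨g, hgiff⟩ := assemble ω₀ ((Module.finrank ℚ K + 1) * 4) (bad.image rep)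
      (by
        intro e he
        obtain ⟨ε, hεmem, rfl⟩ := Finset.mem_image.mp he
        rw [hbad, Finset.mem_filter] at hεmem
        obtain ⟨ω₁, hω₁⟩ := Function.ne_iff.mp hεmem.2
        have hf : ε ω₁ = false := by simpa using hω₁
        refine ⟨ω₁, ?_⟩
        have hspec := hrepspec ε ω₁
        rw [hf] at hspec
        simpa using hspec)
      (by
        intro x hx0 hωneg
        obtain ⟨ω₂, hω₂⟩ := hωneg
        set ε : (K →+* ℝ) → Bool := fun ω => if 0 < ω x then true else false with hε
        have hεω₂ : ε ω₂ = false := by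
          rw [hε]
          simp only [if_neg (lt_asymm hω₂)]
        have hεbad : ε ∈ bad := by
          rw [hbad, Finset.mem_filter]
          refine ⟨Finset.mem_univ _, fun hconst => ?_⟩
          have h5 : ε ω₂ = true := by rw [hconst]
          rw [hεω₂] at h5
          exact Bool.false_ne_true h5
        refine ⟨rep ε, Finset.mem_image_of_mem rep hεbad, ?_⟩
        intro ω
        rw [map_mul]
        have hspec := hrepspec ε ω
        by_cases hc : 0 < ω x
        · have hεt : ε ω = true := by rw [hε]; simp only [if_pos hc]
          rw [hεt] at hspec
          simp only [if_true] at hspec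
          exact mul_pos hc hspec
        · have hεf : ε ω = false := by rw [hε]; simp only [if_neg hc]
          rw [hεf] at hspec
          simp only [Bool.false_eq_true, if_false] at hspec
          have hne0 : ω x ≠ 0 := fun h0 => hx0 (ω.injective (by simp [h0]))
          exact mul_pos_of_neg_of_neg (lt_of_le_of_ne (not_lt.mp hc) hne0) hspec)
      (fun z hz => totPos_rep ω₀ hz)
    exact ⟨(Module.finrank ℚ K + 1) * 4 + 3, g, hgiff⟩
  · refine ⟨0, 1, fun a => ?_⟩
    constructor
    · rintro ⟨_, ω, _⟩
      exact absurd ⟨ω⟩ hne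
    · rintro ⟨r, hr⟩
      simpa using hr
end

section
/- Let K be a number field and let ω : K → ℝ be a real embedding (a ring homomorphism from K into ℝ). Then the set of pairs (x,y) ∈ K^× × K^× such that the equation z² = ω(x)·u² + ω(y)·w² has no solution (u,w,z) ∈ ℝ³ other than (0,0,0) — equivalently, such that ω(x) < 0 and ω(y) < 0 — is diophantine over K (as a subset of K²). -/
open MvPolynomial Module

namespace HilbDioph

variable {K : Type*} [Field K]

def SumSqLen (m : ℕ) (v : K) : Prop := ∃ t : Fin m → K, v = ∑ i, t i ^ 2

lemma SumSqLen.zero (m : ℕ) : SumSqLen m (0 : K) := ⟨fun _ => 0, by simp⟩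

lemma SumSqLen.add {m m' : ℕ} {v w : K} (hv : SumSqLen m v) (hw : SumSqLen m' w) :
    SumSqLen (m + m') (v + w) := by
  obtain ⟨t, rfl⟩ := hv
  obtain ⟨s, rfl⟩ := hw
  exact ⟨Fin.append t s, by rw [Fin.sum_univ_add]; simp⟩

lemma SumSqLen.mono {m m' : ℕ} (h : m ≤ m') {v : K} (hv : SumSqLen m v) : SumSqLen m' v := by
  have := hv.add (SumSqLen.zero (K := K) (m' - m))
  rwa [add_zero, Nat.add_sub_cancel' h] at this

lemma sumSqLen_finsetSum {ι : Type*} (s : Finset ι) (f : ι → K) (c : ℕ)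
    (h : ∀ i ∈ s, SumSqLen c (f i)) : SumSqLen (s.card * c) (∑ i ∈ s, f i) := by
  classical
  induction s using Finset.induction_on with
  | empty => exact ⟨fun i => 0, by simp⟩
  | @insert a s' hx ih =>
    rw [Finset.sum_insert hx, Finset.card_insert_of_notMem hx, add_mul, one_mul,
      add_comm (s'.card * c)]
    exact (h a (Finset.mem_insert_self a s')).add (ih fun i hi => h i (Finset.mem_insert_of_mem hi))

lemma ratCast_sumSqLen_of_pos [CharZero K] {q : ℚ} (hq : 0 < q) : SumSqLen 4 (q : K) := by
  obtain ⟨a, b, c, d, habcd⟩ := Nat.sum_four_squares (q.num.toNat * q.den)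
  have hnum : (0:ℤ) ≤ q.num := le_of_lt (Rat.num_pos.2 hq)
  have hden : (q.den : ℚ) ≠ 0 := by exact_mod_cast q.den_nz
  have h1 : ((a:ℚ)^2+(b:ℚ)^2+(c:ℚ)^2+(d:ℚ)^2) = (q.num : ℚ) * (q.den : ℚ) := by
    have h2 := congrArg (fun n : ℕ => (n : ℚ)) habcd
    push_cast at h2
    rw [h2]
    rw [show ((q.num.toNat : ℚ)) = ((q.num : ℚ)) from by
      exact_mod_cast congrArg (fun z : ℤ => (z : ℚ)) (Int.toNat_of_nonneg hnum)]
  have hq' : q = ((a : ℚ)^2 + b^2 + c^2 + d^2) / (q.den)^2 := by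
    rw [h1]
    rw [eq_div_iff (by positivity)]
    rw [pow_two, ← mul_assoc, Rat.mul_den_eq_num]
  have hdK : ((q.den : K)) ≠ 0 := Nat.cast_ne_zero.mpr q.den_nz
  have hK : (q:K) = ((a:K)^2+(b:K)^2+(c:K)^2+(d:K)^2)/(q.den:K)^2 := by
    have h3 := congrArg (fun r : ℚ => (r : K)) hq'
    push_cast at h3
    exact h3
  refine ⟨![(a:K)/q.den, (b:K)/q.den, (c:K)/q.den, (d:K)/q.den], ?_⟩
  rw [Fin.sum_univ_four]
  simp only [Matrix.cons_val_zero, Matrix.cons_val_one, Matrix.head_cons,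
    Matrix.cons_val_two, Matrix.tail_cons, Matrix.cons_val_three]
  rw [hK]
  field_simp

/-- `v` is a sum of squares. -/
def SOS (v : K) : Prop := ∃ m, SumSqLen m v

lemma SOS.add {v w : K} (hv : SOS v) (hw : SOS w) : SOS (v + w) := by
  obtain ⟨m, hv⟩ := hv; obtain ⟨m', hw⟩ := hw; exact ⟨m + m', hv.add hw⟩

lemma SOS.sq (x : K) : SOS (x ^ 2) := ⟨1, ![x], by simp⟩

lemma SOS.zero : SOS (0 : K) := ⟨0, SumSqLen.zero 0⟩

lemma SOS.one : SOS (1 : K) := by simpa using SOS.sq (1 : K)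

lemma SOS.mul {v w : K} (hv : SOS v) (hw : SOS w) : SOS (v * w) := by
  obtain ⟨m, t, rfl⟩ := hv
  obtain ⟨m', s, rfl⟩ := hw
  rw [Finset.sum_mul]
  refine ⟨m * m', ?_⟩
  have := sumSqLen_finsetSum (Finset.univ : Finset (Fin m))
      (fun i => t i ^ 2 * ∑ j, s j ^ 2) m' ?_
  · simpa using this
  · intro i _
    refine ⟨fun j => t i * s j, ?_⟩
    show t i ^ 2 * (∑ j, s j ^ 2) = ∑ j, (t i * s j) ^ 2
    rw [Finset.mul_sum]
    exact Finset.sum_congr rfl fun j _ => (mul_pow _ _ _).symm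

lemma SOS.apply_nonneg {v : K} (σ : K →+* ℝ) (hv : SOS v) : 0 ≤ σ v := by
  obtain ⟨m, t, rfl⟩ := hv
  rw [map_sum]
  exact Finset.sum_nonneg fun i _ => by rw [map_pow]; positivity

/-- In any linearly ordered field, a root of a monic-style polynomial relation with rational
coefficients is bounded above by a rational. -/
lemma exists_rat_gt_of_poly {L : Type*} [Field L] [LinearOrder L] [IsStrictOrderedRing L] (x : L)
    (h : ∃ (n : ℕ) (c : ℕ → ℚ), 0 < n ∧
      x ^ n = -∑ i ∈ Finset.range n, (c i : L) * x ^ i) :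
    ∃ q : ℚ, x < q := by
  obtain ⟨n, c, hn, hx⟩ := h
  by_contra hq
  push_neg at hq
  set S : ℚ := ∑ i ∈ Finset.range n, |c i| with hS
  have hS0 : 0 ≤ S := Finset.sum_nonneg fun i _ => abs_nonneg _
  have hB : ((1 + S : ℚ) : L) ≤ x := hq _
  have hx1 : (1 : L) ≤ x := by
    refine le_trans ?_ hB
    rw [show ((1:L)) = ((1:ℚ):L) by norm_num]
    exact Rat.cast_le.2 (by linarith)
  have hx0 : (0 : L) < x := lt_of_lt_of_le zero_lt_one hx1
  obtain ⟨m, rfl⟩ : ∃ m, n = m + 1 := ⟨n - 1, (Nat.succ_pred_eq_of_pos hn).symm⟩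
  have key : x ^ (m + 1) ≤ ((S : ℚ) : L) * x ^ m := by
    rw [hx]
    have h1 : -∑ i ∈ Finset.range (m+1), ((c i : L) * x ^ i)
        = ∑ i ∈ Finset.range (m+1), (-(c i : L) * x ^ i) := by
      simp [neg_mul]
    have h2 : ((S:ℚ):L) * x ^ m = ∑ i ∈ Finset.range (m+1), ((|c i| : ℚ) : L) * x ^ m := by
      rw [hS]
      push_cast
      rw [Finset.sum_mul]
    rw [h1, h2]
    refine Finset.sum_le_sum fun i hi => ?_
    have hxi : x ^ i ≤ x ^ m := pow_le_pow_right₀ hx1 (Nat.lt_succ_iff.1 (Finset.mem_range.1 hi))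
    have habs : (-(c i : L)) ≤ ((|c i| : ℚ) : L) := by
      rw [show (-(c i : L)) = ((-(c i) : ℚ) : L) by push_cast; ring]
      exact Rat.cast_le.2 (neg_le_abs _)
    have habs0 : (0:L) ≤ ((|c i| : ℚ) : L) := by
      rw [show ((0:L)) = ((0:ℚ):L) by norm_num]
      exact Rat.cast_le.2 (abs_nonneg _)
    calc -(c i : L) * x ^ i ≤ ((|c i| : ℚ) : L) * x ^ i :=
          mul_le_mul_of_nonneg_right habs (pow_nonneg hx0.le i)
      _ ≤ ((|c i| : ℚ) : L) * x ^ m := mul_le_mul_of_nonneg_left hxi habs0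
  have hxm : 0 < x ^ m := pow_pos hx0 m
  have hcast : (1:L) + (S:L) ≤ x := by push_cast at hB; linarith
  have hS0' : (0:L) ≤ (S:L) := by exact_mod_cast hS0
  have h3 : x ^ (m+1) = x ^ m * x := pow_succ x m
  have h4 : x ^ m * ((1:L) + (S:L)) ≤ x ^ m * x := mul_le_mul_of_nonneg_left hcast hxm.le
  nlinarith [key, hxm, h3, h4]

section Artin
variable [NumberField K]

theorem sos_of_forall_pos (ω : K →+* ℝ) {v : K}
    (hv : ∀ σ : K →+* ℝ, 0 < σ v) : SOS v := by
  classical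
  by_contra hns
  set 𝒮 : Set (Set K) := {T | (∀ x : K, x ^ 2 ∈ T) ∧ (∀ a ∈ T, ∀ b ∈ T, a + b ∈ T) ∧
      (∀ a ∈ T, ∀ b ∈ T, a * b ∈ T) ∧ (-1 : K) ∉ T ∧ -v ∈ T} with h𝒮def
  have hpoly : ∀ x : K, ∃ (n : ℕ) (c : ℕ → ℚ), 0 < n ∧
      x ^ n = -∑ i ∈ Finset.range n, (c i : K) * x ^ i := by
    intro x
    have hint : IsIntegral ℚ x := (Algebra.IsAlgebraic.isAlgebraic x).isIntegral
    have hmonic : (minpoly ℚ x).Monic := minpoly.monic hint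
    have hdeg : 0 < (minpoly ℚ x).natDegree := minpoly.natDegree_pos hint
    have haev : Polynomial.aeval x (minpoly ℚ x) = 0 := minpoly.aeval ℚ x
    refine ⟨(minpoly ℚ x).natDegree, fun i => (minpoly ℚ x).coeff i, hdeg, ?_⟩
    rw [Polynomial.aeval_eq_sum_range, Finset.sum_range_succ, hmonic.coeff_natDegree,
      one_smul] at haev
    have hx := eq_neg_of_add_eq_zero_left
      ((add_comm (x ^ (minpoly ℚ x).natDegree) _) ▸ haev)
    rw [hx]
    congr 1
    exact Finset.sum_congr rfl fun i _ => by rw [Rat.smul_def]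
  have hT0 : {x : K | ∃ p q : K, SOS p ∧ SOS q ∧ x = p - v * q} ∈ 𝒮 := by
    refine ⟨?_, ?_, ?_, ?_, ?_⟩
    · exact fun x => ⟨x ^ 2, 0, SOS.sq x, SOS.zero, by ring⟩
    · rintro a ⟨p, q, hp, hq, rfl⟩ b ⟨p', q', hp', hq', rfl⟩
      exact ⟨p + p', q + q', hp.add hp', hq.add hq', by ring⟩
    · rintro a ⟨p, q, hp, hq, rfl⟩ b ⟨p', q', hp', hq', rfl⟩
      refine ⟨p * p' + (q * q') * v ^ 2, p * q' + p' * q,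
        (hp.mul hp').add ((hq.mul hq').mul (SOS.sq v)), (hp.mul hq').add (hp'.mul hq), by ring⟩
    · rintro ⟨p, q, hp, hq, h1⟩
      rcases eq_or_ne q 0 with rfl | hq0
      · rw [mul_zero, sub_zero] at h1
        have hnn := hp.apply_nonneg ω
        rw [← h1] at hnn
        rw [map_neg, map_one] at hnn
        linarith
      · apply hns
        have hq1 : v * q = 1 + p := by linear_combination h1
        have hveq : v = ((1 + p) * q) * (q⁻¹) ^ 2 := by
          rw [← hq1]; field_simp
        rw [hveq]
        exact ((SOS.one.add hp).mul hq).mul (SOS.sq _)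
    · exact ⟨0, 1, SOS.zero, SOS.one, by ring⟩
  obtain ⟨M, -, hMmax⟩ := zorn_subset_nonempty 𝒮 (by
    intro c hc𝒮 hchain hne
    obtain ⟨T₀, hT₀c⟩ := hne
    refine ⟨⋃₀ c, ⟨?_, ?_, ?_, ?_, ?_⟩, fun s hs => Set.subset_sUnion_of_mem hs⟩
    · exact fun x => ⟨T₀, hT₀c, (hc𝒮 hT₀c).1 x⟩
    · rintro a ⟨T1, hT1, ha⟩ b ⟨T2, hT2, hb⟩
      rcases hchain.total hT1 hT2 with h | h
      · exact ⟨T2, hT2, (hc𝒮 hT2).2.1 a (h ha) b hb⟩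
      · exact ⟨T1, hT1, (hc𝒮 hT1).2.1 a ha b (h hb)⟩
    · rintro a ⟨T1, hT1, ha⟩ b ⟨T2, hT2, hb⟩
      rcases hchain.total hT1 hT2 with h | h
      · exact ⟨T2, hT2, (hc𝒮 hT2).2.2.1 a (h ha) b hb⟩
      · exact ⟨T1, hT1, (hc𝒮 hT1).2.2.1 a ha b (h hb)⟩
    · rintro ⟨T1, hT1, h1⟩
      exact (hc𝒮 hT1).2.2.2.1 h1
    · exact ⟨T₀, hT₀c, (hc𝒮 hT₀c).2.2.2.2⟩) _ hT0
  obtain ⟨hsq, hadd, hmul, hn1, hnv⟩ := hMmax.prop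
  have h0M : (0:K) ∈ M := by simpa using hsq 0
  have h1M : (1:K) ∈ M := by simpa using hsq 1
  have htotal : ∀ a : K, a ∉ M → -a ∈ M := by
    intro a ha
    have hM' : {x : K | ∃ p ∈ M, ∃ q ∈ M, x = p + (-a) * q} ∈ 𝒮 := by
      refine ⟨?_, ?_, ?_, ?_, ?_⟩
      · exact fun x => ⟨x ^ 2, hsq x, 0, h0M, by ring⟩
      · rintro x ⟨p, hp, q, hq, rfl⟩ y ⟨p', hp', q', hq', rfl⟩
        exact ⟨p + p', hadd _ hp _ hp', q + q', hadd _ hq _ hq', by ring⟩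
      · rintro x ⟨p, hp, q, hq, rfl⟩ y ⟨p', hp', q', hq', rfl⟩
        refine ⟨p * p' + a ^ 2 * (q * q'), ?_, p * q' + p' * q, ?_, by ring⟩
        · exact hadd _ (hmul _ hp _ hp') _ (hmul _ (hsq a) _ (hmul _ hq _ hq'))
        · exact hadd _ (hmul _ hp _ hq') _ (hmul _ hp' _ hq)
      · rintro ⟨p, hp, q, hq, h1⟩
        rcases eq_or_ne q 0 with rfl | hq0
        · rw [mul_zero, add_zero] at h1; exact hn1 (h1 ▸ hp)
        · apply ha
          have hq1 : a * q = 1 + p := by linear_combination h1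
          have haeq : a = ((1 + p) * q) * (q⁻¹) ^ 2 := by
            rw [← hq1]; field_simp
          rw [haeq]
          exact hmul _ (hmul _ (hadd _ h1M _ hp) _ hq) _ (hsq _)
      · exact ⟨-v, hnv, 0, h0M, by ring⟩
    have hsub : M ⊆ {x : K | ∃ p ∈ M, ∃ q ∈ M, x = p + (-a) * q} :=
      fun x hx => ⟨x, hx, 0, h0M, by ring⟩
    exact hMmax.2 hM' hsub ⟨0, h0M, 1, h1M, by ring⟩
  have hanti : ∀ a : K, a ∈ M → -a ∈ M → a = 0 := by
    intro a ha hna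
    by_contra ha0
    refine hn1 ?_
    have h1eq : (-1 : K) = (a * -a) * (a⁻¹) ^ 2 := by
      field_simp
    rw [h1eq]
    exact hmul _ (hmul _ ha _ hna) _ (hsq _)
  letI instLinearOrder : LinearOrder K := {
    le := fun a b => b - a ∈ M
    le_refl := fun a => by simpa using h0M
    le_trans := fun a b c hab hbc => by
      have := hadd _ hbc _ hab
      simpa [sub_add_sub_cancel] using this
    le_antisymm := fun a b hab hba => by
      have h := hanti (a - b) hba (by simpa [neg_sub] using hab)
      exact sub_eq_zero.mp h
    le_total := fun a b => by
      rcases Classical.em (b - a ∈ M) with h | h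
      · exact Or.inl h
      · exact Or.inr (by simpa [neg_sub] using htotal _ h)
    toDecidableLE := Classical.decRel _ }
  letI instLOF : IsStrictOrderedRing K :=
    haveI : IsOrderedAddMonoid K := {
      add_le_add_left := fun a b hab c => by
        show b + c - (a + c) ∈ M
        rw [add_sub_add_right_eq_sub]; exact hab }
    haveI : ZeroLEOneClass K := {
      zero_le_one := by
        show (1:K) - 0 ∈ M
        simpa using h1M }
    IsStrictOrderedRing.of_mul_pos fun a b ha hb => by
        obtain ⟨ha1, ha2⟩ := lt_iff_le_not_ge.1 ha
        obtain ⟨hb1, hb2⟩ := lt_iff_le_not_ge.1 hb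
        have haM : a ∈ M := by have h' : a - 0 ∈ M := ha1; rwa [sub_zero] at h'
        have hbM : b ∈ M := by have h' : b - 0 ∈ M := hb1; rwa [sub_zero] at h'
        refine lt_iff_le_not_ge.2 ⟨?_, ?_⟩
        · show a * b - 0 ∈ M
          rw [sub_zero]
          exact hmul _ haM _ hbM
        · intro hc
          have hneg : -(a * b) ∈ M := by
            have h' : (0:K) - a * b ∈ M := hc
            rwa [zero_sub] at h'
          have h0 := hanti _ (hmul _ haM _ hbM) hneg
          rcases mul_eq_zero.1 h0 with rfl | rfl
          · exact ha2 (by show (0:K) - 0 ∈ M; rw [sub_zero]; exact h0M)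
          · exact hb2 (by show (0:K) - 0 ∈ M; rw [sub_zero]; exact h0M)
  haveI harch : Archimedean K :=
    archimedean_iff_rat_lt.2 fun x => exists_rat_gt_of_poly x (hpoly x)
  have hmono := (ConditionallyCompleteLinearOrderedField.inducedOrderRingHom K ℝ).monotone'
  set σ : K →+* ℝ := (ConditionallyCompleteLinearOrderedField.inducedOrderRingHom K ℝ).toRingHom with hσ
  have hv0 : v ≤ (0:K) := by
    show (0:K) - v ∈ M
    simpa using hnv
  have hle : σ v ≤ σ 0 := hmono hv0
  rw [map_zero] at hle
  exact absurd (hv σ) (not_lt.2 hle)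

end Artin

section Bounded
variable [NumberField K]

omit [NumberField K] in
lemma SumSqLen.mul_sq {m : ℕ} {c : K} (h : SumSqLen m c) (k : K) :
    SumSqLen m (c * k ^ 2) := by
  obtain ⟨t, rfl⟩ := h
  exact ⟨fun i => t i * k, by rw [Finset.sum_mul]; exact Finset.sum_congr rfl fun i _ => by ring⟩

theorem sumSqLen_of_sos {v : K} (h : SOS v) : SumSqLen (4 * (finrank ℚ K + 1)) v := by
  classical
  obtain ⟨N, t, hvt⟩ := h
  rcases eq_or_ne v 0 with rfl | hv0
  · exact SumSqLen.zero _
  have hN : N ≠ 0 := by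
    rintro rfl
    rw [Fin.sum_univ_zero] at hvt
    exact hv0 hvt
  set S : Set K := {x | ∃ k : K, x = k ^ 2} with hSdef
  have hcm : (Finset.univ : Finset (Fin N)).centerMass (fun _ => (1:ℚ)) (fun i => t i ^ 2)
      = (N:ℚ)⁻¹ • v := by
    rw [Finset.centerMass, hvt]
    simp
  have hmem : (N:ℚ)⁻¹ • v ∈ convexHull ℚ S := by
    rw [← hcm]
    refine Finset.centerMass_mem_convexHull _ (fun i _ => zero_le_one) ?_ (fun i _ => ⟨t i, rfl⟩)
    simp [Finset.card_univ]
    exact Nat.pos_of_ne_zero hN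
  obtain ⟨ι, hι, z, w, hzS, hai, hwpos, hwsum, hsum⟩ := eq_pos_convex_span_of_mem_convexHull hmem
  have hcard : Fintype.card ι ≤ finrank ℚ K + 1 :=
    le_trans hai.card_le_finrank_succ (Nat.add_le_add_right (Submodule.finrank_le _) 1)
  have hveq : v = ∑ i, ((N:ℚ) * w i) • z i := by
    have h1 : (N:ℚ) • ((N:ℚ)⁻¹ • v) = v := by
      rw [smul_smul, mul_inv_cancel₀ (by exact_mod_cast hN), one_smul]
    rw [← h1, ← hsum, Finset.smul_sum]
    exact Finset.sum_congr rfl fun i _ => by rw [smul_smul]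
  have hterm : ∀ i : ι, SumSqLen 4 (((N:ℚ) * w i) • z i) := by
    intro i
    obtain ⟨k, hk⟩ := hzS (Set.mem_range_self i)
    have hq : (0:ℚ) < (N:ℚ) * w i :=
      mul_pos (by exact_mod_cast Nat.pos_of_ne_zero hN) (hwpos i)
    have := (ratCast_sumSqLen_of_pos (K := K) hq).mul_sq k
    rw [Rat.smul_def, hk]
    exact this
  have := sumSqLen_finsetSum (Finset.univ : Finset ι) _ 4 (fun i _ => hterm i)
  rw [← hveq] at this
  rw [Finset.card_univ] at this
  exact this.mono (by omega)

theorem sumSqLen_of_forall_pos (ω : K →+* ℝ) {v : K}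
    (hv : ∀ σ : K →+* ℝ, 0 < σ v) : SumSqLen (4 * (finrank ℚ K + 1)) v :=
  sumSqLen_of_sos (sos_of_forall_pos ω hv)

end Bounded

section Signs
variable [NumberField K]

theorem dense_range_embeddings [Fintype (K →+* ℝ)] :
    Dense (Set.range (fun x : K => (fun σ : K →+* ℝ => σ x))) := by
  classical
  set ι := (K →+* ℝ)
  set S : Set (ι → ℝ) := Set.range (fun x : K => (fun σ : ι => σ x)) with hSdef
  have hadd : ∀ a ∈ S, ∀ b ∈ S, a + b ∈ S := by
    rintro _ ⟨x, rfl⟩ _ ⟨y, rfl⟩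
    exact ⟨x + y, by funext σ; simp⟩
  have hzero : (0 : ι → ℝ) ∈ S := ⟨0, by funext σ; simp⟩
  have hqsmul : ∀ (q : ℚ), ∀ w ∈ closure S, (q : ℝ) • w ∈ closure S := by
    intro q w hw
    have hcont : Continuous (fun y : ι → ℝ => (q : ℝ) • y) := continuous_const_smul _
    have hmaps : Set.MapsTo (fun y : ι → ℝ => (q : ℝ) • y) S S := by
      rintro _ ⟨x, rfl⟩
      refine ⟨(q : K) * x, ?_⟩
      funext σ
      simp [Pi.smul_apply, map_mul, map_ratCast]
    exact hmaps.closure hcont hw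
  have hsmul : ∀ (r : ℝ), ∀ w ∈ closure S, r • w ∈ closure S := by
    intro r w hw
    have hclosed : IsClosed {r : ℝ | r • w ∈ closure S} :=
      IsClosed.preimage (continuous_id.smul continuous_const) isClosed_closure
    have hQsub : Set.range ((↑) : ℚ → ℝ) ⊆ {r : ℝ | r • w ∈ closure S} := by
      rintro _ ⟨q, rfl⟩
      exact hqsmul q w hw
    have huniv : (Set.univ : Set ℝ) ⊆ {r : ℝ | r • w ∈ closure S} := by
      calc (Set.univ : Set ℝ) = closure (Set.range ((↑) : ℚ → ℝ)) :=
            (Rat.denseRange_cast).closure_eq.symm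
        _ ⊆ closure {r : ℝ | r • w ∈ closure S} := closure_mono hQsub
        _ = {r : ℝ | r • w ∈ closure S} := hclosed.closure_eq
    exact huniv (Set.mem_univ r)
  have haddc : ∀ a ∈ closure S, ∀ b ∈ closure S, a + b ∈ closure S := by
    intro a ha b hb
    have : Set.MapsTo (fun p : (ι → ℝ) × (ι → ℝ) => p.1 + p.2) (S ×ˢ S) S := by
      rintro ⟨a', b'⟩ ⟨ha', hb'⟩
      exact hadd a' ha' b' hb'
    have hc : Continuous (fun p : (ι → ℝ) × (ι → ℝ) => p.1 + p.2) := continuous_add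
    have := this.closure hc (x := (a, b)) (by
      rw [closure_prod_eq]
      exact ⟨ha, hb⟩)
    exact this
  let W : Submodule ℝ (ι → ℝ) :=
    { carrier := closure S
      add_mem' := fun {a b} ha hb => haddc a ha b hb
      zero_mem' := subset_closure hzero
      smul_mem' := fun r {w} hw => hsmul r w hw }
  have hWtop : W = ⊤ := by
    by_contra hne
    obtain ⟨f, hf0, hfbot⟩ := Submodule.exists_dual_map_eq_bot_of_lt_top
      (lt_top_iff_ne_top.2 hne) inferInstance
    have hvan : ∀ y ∈ W, f y = 0 := by
      intro y hy
      have hmem : f y ∈ W.map f := Submodule.mem_map_of_mem hy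
      rw [hfbot] at hmem
      exact (Submodule.mem_bot ℝ).1 hmem
    have hli : LinearIndependent ℝ (fun σ : ι => ((σ : K →* ℝ) : K → ℝ)) := by
      refine (linearIndependent_monoidHom K ℝ).comp (fun σ : ι => (σ : K →* ℝ)) ?_
      intro σ τ h
      ext x
      exact DFunLike.congr_fun h x
    have hcoeff : ∀ σ : ι, f (fun j => if σ = j then (1:ℝ) else 0) = 0 := by
      have hsum : ∑ σ : ι, f (fun j => if σ = j then (1:ℝ) else 0) •
          ((σ : K →* ℝ) : K → ℝ) = 0 := by
        funext x
        rw [Finset.sum_apply]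
        have h0 : f (fun σ : ι => σ x) = 0 := hvan _ (subset_closure ⟨x, rfl⟩)
        rw [LinearMap.pi_apply_eq_sum_univ f (fun σ : ι => σ x)] at h0
        have hsame : ∑ σ : ι, (f (fun j => if σ = j then (1:ℝ) else 0) •
            ((σ : K →* ℝ) : K → ℝ)) x
            = ∑ i : ι, i x • f fun j => if i = j then (1:ℝ) else 0 := by
          refine Finset.sum_congr rfl fun σ _ => ?_
          simp only [Pi.smul_apply, smul_eq_mul]
          show (f fun j => if σ = j then (1:ℝ) else 0) * σ x
              = σ x * (f fun j => if σ = j then (1:ℝ) else 0)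
          exact mul_comm _ _
        rw [Pi.zero_apply, hsame]
        exact h0
      intro σ
      exact Fintype.linearIndependent_iff.1 hli _ hsum σ
    apply hf0
    refine LinearMap.ext fun y => ?_
    rw [LinearMap.pi_apply_eq_sum_univ f y]
    simp [hcoeff]
  have : (W : Set (ι → ℝ)) = Set.univ := by rw [hWtop]; rfl
  rw [dense_iff_closure_eq]
  exact this

theorem exists_sign_pattern (ε : (K →+* ℝ) → Bool) :
    ∃ c : K, ∀ σ : K →+* ℝ, (if ε σ then 0 < σ c else σ c < 0) := by
  classical
  haveI : Finite (K →+* ℝ) := by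
    have hinj : Function.Injective (fun σ : K →+* ℝ => Complex.ofRealHom.comp σ) := by
      intro σ τ h
      ext x
      have := RingHom.congr_fun h x
      simpa using this
    exact Finite.of_injective _ hinj
  haveI : Fintype (K →+* ℝ) := Fintype.ofFinite _
  have hdense := dense_range_embeddings (K := K)
  set U : Set ((K →+* ℝ) → ℝ) := {y | ∀ σ, (if ε σ then 0 < y σ else y σ < 0)} with hU
  have hUopen : IsOpen U := by
    have : U = ⋂ σ : (K →+* ℝ), (fun y : (K →+* ℝ) → ℝ => y σ) ⁻¹'
        (if ε σ then Set.Ioi (0:ℝ) else Set.Iio 0) := by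
      ext y
      simp only [hU, Set.mem_setOf_eq, Set.mem_iInter, Set.mem_preimage]
      refine forall_congr' fun σ => ?_
      by_cases hεσ : ε σ = true <;> simp [hεσ]
    rw [this]
    refine isOpen_iInter_of_finite fun σ => ?_
    by_cases hεσ : ε σ = true
    · simp only [hεσ, if_true]
      exact (isOpen_Ioi).preimage (continuous_apply σ)
    · simp only [hεσ, if_false]
      exact (isOpen_Iio).preimage (continuous_apply σ)
  have hUne : U.Nonempty := by
    refine ⟨fun σ => if ε σ then (1:ℝ) else -1, fun σ => ?_⟩
    by_cases hεσ : ε σ = true <;> simp [hεσ]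
  obtain ⟨y, hyU, hyS⟩ := hdense.inter_open_nonempty U hUopen hUne
  obtain ⟨c, rfl⟩ := hyS
  exact ⟨c, hyU⟩

end Signs

section DiophCombinator

omit [Field K] in
lemma sum_elim_comp_map {m : ℕ} {ν ν' : Type*} (a : Fin m → K) (r : ν' → K) (h : ν → ν') :
    Sum.elim a r ∘ Sum.map id h = Sum.elim a (r ∘ h) := by
  funext s
  cases s <;> rfl

theorem isDiophantine_finite_union {m : ℕ} {ι' : Type*} [Fintype ι'] {ν : Type*} [Fintype ν]
    (P : ι' → MvPolynomial (Fin m ⊕ ν) K) :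
    IsDiophantine {a : Fin m → K | ∃ (j : ι') (r : ν → K),
      MvPolynomial.eval (Sum.elim a r) (P j) = 0} := by
  classical
  set n := Fintype.card (ι' × ν) with hn
  set e : (ι' × ν) ≃ Fin n := Fintype.equivFin _ with he
  refine ⟨n, ∏ j : ι', MvPolynomial.rename (Sum.map id (fun v : ν => e (j, v))) (P j),
    fun a => ?_⟩
  have hev : ∀ (r : Fin n → K) (j : ι'),
      MvPolynomial.eval (Sum.elim a r)
        (MvPolynomial.rename (Sum.map id fun v : ν => e (j, v)) (P j))
        = MvPolynomial.eval (Sum.elim a (fun v => r (e (j, v)))) (P j) := by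
    intro r j
    rw [MvPolynomial.eval_rename, sum_elim_comp_map]
    rfl
  constructor
  · rintro ⟨j, r, hr⟩
    refine ⟨fun i => r (e.symm i).2, ?_⟩
    rw [map_prod]
    refine Finset.prod_eq_zero (Finset.mem_univ j) ?_
    rw [hev]
    have : (fun v => (fun i => r (e.symm i).2) (e (j, v))) = r := by
      funext v
      simp
    rw [this]
    exact hr
  · rintro ⟨r, hr⟩
    rw [map_prod] at hr
    obtain ⟨j, -, hj⟩ := Finset.prod_eq_zero_iff.1 hr
    exact ⟨j, fun v => r (e (j, v)), by rw [← hev r j]; exact hj⟩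

end DiophCombinator

section FourSquares

lemma eq_zero_of_four_sq (ω : K →+* ℝ) {p q u v : K}
    (h : p ^ 2 + q ^ 2 + (u ^ 2 + v ^ 2) = 0) :
    p = 0 ∧ q = 0 ∧ u = 0 ∧ v = 0 := by
  have hr := congrArg ω h
  rw [map_add, map_add, map_add, map_pow, map_pow, map_pow, map_pow, map_zero] at hr
  have hp : ω p = 0 := by nlinarith [sq_nonneg (ω p), sq_nonneg (ω q), sq_nonneg (ω u), sq_nonneg (ω v)]
  have hq : ω q = 0 := by nlinarith [sq_nonneg (ω p), sq_nonneg (ω q), sq_nonneg (ω u), sq_nonneg (ω v)]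
  have hu : ω u = 0 := by nlinarith [sq_nonneg (ω p), sq_nonneg (ω q), sq_nonneg (ω u), sq_nonneg (ω v)]
  have hv : ω v = 0 := by nlinarith [sq_nonneg (ω p), sq_nonneg (ω q), sq_nonneg (ω u), sq_nonneg (ω v)]
  have hinj : Function.Injective ω := ω.injective
  exact ⟨hinj (by rw [hp, map_zero]), hinj (by rw [hq, map_zero]),
    hinj (by rw [hu, map_zero]), hinj (by rw [hv, map_zero])⟩

end FourSquares

end HilbDioph

/-- **Lemma.** Let `K` be a number field and `ω : K → ℝ` a real embedding. Then the set of
pairs `(x,y)` of nonzero elements of `K` such that `z² = ω(x)·u² + ω(y)·w²` has no solution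
`(u,w,z) ∈ ℝ³` other than `(0,0,0)` is diophantine over `K`. -/
theorem hilbertSymbol_real_isDiophantine (K : Type*) [Field K] [NumberField K]
    (ω : K →+* ℝ) :
    IsDiophantine {f : Fin 2 → K | f 0 ≠ 0 ∧ f 1 ≠ 0 ∧
      ∀ u w z : ℝ, z ^ 2 = ω (f 0) * u ^ 2 + ω (f 1) * w ^ 2 →
        u = 0 ∧ w = 0 ∧ z = 0} := by
  classical
  haveI : Finite (K →+* ℝ) := by
    have hinj : Function.Injective (fun σ : K →+* ℝ => Complex.ofRealHom.comp σ) := by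
      intro σ τ h
      ext x
      have := RingHom.congr_fun h x
      simpa using this
    exact Finite.of_injective _ hinj
  haveI : Fintype (K →+* ℝ) := Fintype.ofFinite _
  set m := 4 * (Module.finrank ℚ K + 1) with hm
  -- sign-pattern constants
  have hDex : ∀ ε : (K →+* ℝ) → Bool, ∃ c : K, 0 < ω c ∧
      ∀ σ : K →+* ℝ, σ ≠ ω → (if ε σ then 0 < σ c else σ c < 0) := by
    intro ε
    obtain ⟨c, hc⟩ := HilbDioph.exists_sign_pattern (K := K) (Function.update ε ω true)
    refine ⟨c, ?_, fun σ hσ => ?_⟩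
    · have h := hc ω
      rwa [Function.update_self, if_pos rfl] at h
    · have h := hc σ
      rwa [Function.update_of_ne hσ] at h
  choose D hD1 hD2 using hDex
  -- the one-variable characterization
  have hchar : ∀ x : K, (ω x < 0) ↔ ∃ (ε : (K →+* ℝ) → Bool) (t : Fin m → K) (z : K),
      D ε * -x - ∑ i, t i ^ 2 = 0 ∧ (D ε * -x) * z - 1 = 0 := by
    intro x
    constructor
    · intro hx
      have hxne : x ≠ 0 := fun h => by rw [h, map_zero] at hx; exact lt_irrefl 0 hx
      set ε : (K →+* ℝ) → Bool := fun σ => decide (0 < σ (-x)) with hε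
      have hpos : ∀ σ : K →+* ℝ, 0 < σ (D ε * -x) := by
        intro σ
        rw [map_mul]
        rcases eq_or_ne σ ω with rfl | hσ
        · rw [map_neg]
          exact mul_pos (hD1 ε) (by linarith)
        · have hx0 : σ (-x) ≠ 0 := by
            rw [map_neg, neg_ne_zero]
            exact fun h0 => hxne (σ.injective (by rw [h0, map_zero]))
          have hif := hD2 ε σ hσ
          by_cases hs : 0 < σ (-x)
          · have hb : ε σ = true := decide_eq_true hs
            rw [hb, if_pos rfl] at hif
            exact mul_pos hif hs
          · have hb : ε σ = false := decide_eq_false hs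
            rw [hb] at hif
            simp only [Bool.false_eq_true, if_false] at hif
            have hneg : σ (-x) < 0 := lt_of_le_of_ne (not_lt.1 hs) hx0
            exact mul_pos_of_neg_of_neg hif hneg
      have hne : D ε * -x ≠ 0 := by
        intro h
        have := hpos ω
        rw [h, map_zero] at this
        exact lt_irrefl 0 this
      obtain ⟨t, ht⟩ := HilbDioph.sumSqLen_of_forall_pos ω hpos
      exact ⟨ε, t, (D ε * -x)⁻¹, sub_eq_zero_of_eq ht,
        by rw [mul_inv_cancel₀ hne, sub_self]⟩
    · rintro ⟨ε, t, z, h1, h2⟩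
      have hne : D ε * -x ≠ 0 := by
        intro h0
        rw [h0, zero_mul, zero_sub, neg_eq_zero] at h2
        exact one_ne_zero h2
      have heq : D ε * -x = ∑ i, t i ^ 2 := sub_eq_zero.mp h1
      have hnn : 0 ≤ ω (D ε * -x) := by
        rw [heq, map_sum]
        exact Finset.sum_nonneg fun i _ => by rw [map_pow]; positivity
      have hne' : ω (D ε * -x) ≠ 0 := fun h => hne (ω.injective (by rw [h, map_zero]))
      have hposω : 0 < ω (D ε * -x) := hnn.lt_of_ne (Ne.symm hne')
      rw [map_mul, map_neg] at hposω
      have hd := hD1 ε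
      nlinarith
  -- set identification
  have hset : {f : Fin 2 → K | f 0 ≠ 0 ∧ f 1 ≠ 0 ∧
      ∀ u w z : ℝ, z ^ 2 = ω (f 0) * u ^ 2 + ω (f 1) * w ^ 2 →
        u = 0 ∧ w = 0 ∧ z = 0}
      = {f : Fin 2 → K | ω (f 0) < 0 ∧ ω (f 1) < 0} := by
    ext f
    simp only [Set.mem_setOf_eq]
    constructor
    · rintro ⟨h0, h1, hq⟩
      constructor
      · by_contra hge
        push_neg at hge
        have := hq 1 0 (Real.sqrt (ω (f 0)))
          (by rw [Real.sq_sqrt hge]; ring)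
        exact one_ne_zero this.1
      · by_contra hge
        push_neg at hge
        have := hq 0 1 (Real.sqrt (ω (f 1)))
          (by rw [Real.sq_sqrt hge]; ring)
        exact one_ne_zero this.2.1
    · rintro ⟨h0, h1⟩
      have hx0 : f 0 ≠ 0 := fun h => by rw [h, map_zero] at h0; exact lt_irrefl 0 h0
      have hx1 : f 1 ≠ 0 := fun h => by rw [h, map_zero] at h1; exact lt_irrefl 0 h1
      refine ⟨hx0, hx1, fun u w z hz => ?_⟩
      have hz2 : z ^ 2 = 0 := le_antisymm (by nlinarith [sq_nonneg u, sq_nonneg w]) (by positivity)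
      have hz0 : z = 0 := (pow_eq_zero_iff two_ne_zero).mp hz2
      have hsum : ω (f 0) * u ^ 2 + ω (f 1) * w ^ 2 = 0 := by rw [← hz, hz2]
      have hu2 : u ^ 2 = 0 := by nlinarith [sq_nonneg u, sq_nonneg w]
      have hw2 : w ^ 2 = 0 := by nlinarith [sq_nonneg u, sq_nonneg w]
      exact ⟨(pow_eq_zero_iff two_ne_zero).mp hu2, (pow_eq_zero_iff two_ne_zero).mp hw2, hz0⟩
  rw [hset]
  -- the union shape
  set ι' := (((K →+* ℝ) → Bool) × ((K →+* ℝ) → Bool)) with hι'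
  set ν := ((Fin m ⊕ Unit) ⊕ (Fin m ⊕ Unit)) with hν
  set P : ι' → MvPolynomial (Fin 2 ⊕ ν) K := fun j =>
    (MvPolynomial.C (D j.1) * (- MvPolynomial.X (Sum.inl 0)) -
        ∑ i : Fin m, (MvPolynomial.X (Sum.inr (Sum.inl (Sum.inl i)) : Fin 2 ⊕ ν)) ^ 2) ^ 2
    + (MvPolynomial.C (D j.1) * (- MvPolynomial.X (Sum.inl 0)) *
        MvPolynomial.X (Sum.inr (Sum.inl (Sum.inr ())) : Fin 2 ⊕ ν) - 1) ^ 2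
    + ((MvPolynomial.C (D j.2) * (- MvPolynomial.X (Sum.inl 1)) -
        ∑ i : Fin m, (MvPolynomial.X (Sum.inr (Sum.inr (Sum.inl i)) : Fin 2 ⊕ ν)) ^ 2) ^ 2
    + (MvPolynomial.C (D j.2) * (- MvPolynomial.X (Sum.inl 1)) *
        MvPolynomial.X (Sum.inr (Sum.inr (Sum.inr ())) : Fin 2 ⊕ ν) - 1) ^ 2) with hP
  have heval : ∀ (j : ι') (a : Fin 2 → K) (r : ν → K),
      MvPolynomial.eval (Sum.elim a r) (P j)
      = (D j.1 * -(a 0) - ∑ i : Fin m, r (Sum.inl (Sum.inl i)) ^ 2) ^ 2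
      + ((D j.1 * -(a 0)) * r (Sum.inl (Sum.inr ())) - 1) ^ 2
      + ((D j.2 * -(a 1) - ∑ i : Fin m, r (Sum.inr (Sum.inl i)) ^ 2) ^ 2
      + ((D j.2 * -(a 1)) * r (Sum.inr (Sum.inr ())) - 1) ^ 2) := by
    intro j a r
    simp [hP]
  have hsets : {f : Fin 2 → K | ω (f 0) < 0 ∧ ω (f 1) < 0}
      = {a : Fin 2 → K | ∃ (j : ι') (r : ν → K),
          MvPolynomial.eval (Sum.elim a r) (P j) = 0} := by
    ext a
    simp only [Set.mem_setOf_eq]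
    constructor
    · rintro ⟨h0, h1⟩
      obtain ⟨ε₁, t₁, z₁, he1, he2⟩ := (hchar (a 0)).mp h0
      obtain ⟨ε₂, t₂, z₂, he3, he4⟩ := (hchar (a 1)).mp h1
      refine ⟨(ε₁, ε₂), Sum.elim (Sum.elim t₁ (fun _ => z₁)) (Sum.elim t₂ (fun _ => z₂)), ?_⟩
      rw [heval]
      simp only [Sum.elim_inl, Sum.elim_inr]
      rw [he1, he2, he3, he4]
      norm_num
    · rintro ⟨j, r, hr⟩
      rw [heval] at hr
      obtain ⟨hE1, hE2, hE3, hE4⟩ := HilbDioph.eq_zero_of_four_sq ω hr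
      constructor
      · exact (hchar (a 0)).mpr
          ⟨j.1, fun i => r (Sum.inl (Sum.inl i)), r (Sum.inl (Sum.inr ())), hE1, hE2⟩
      · exact (hchar (a 1)).mpr
          ⟨j.2, fun i => r (Sum.inr (Sum.inl i)), r (Sum.inr (Sum.inr ())), hE3, hE4⟩
  rw [hsets]
  exact HilbDioph.isDiophantine_finite_union P
end

section
/- Let F be a field that is a finite-dimensional field extension of the field ℚ₂ of 2-adic numbers. Then the subgroup of squares (F^×)² = {x² : x ∈ F^×} has finite index in the multiplicative group F^×; equivalently, the quotient group F^×/(F^×)² is finite. -/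
/-!
For a complete nontrivially normed field `F` and `(n : F) ≠ 0`, the map `x ↦ xⁿ` has derivative
`n ≠ 0` at `1`, so by the inverse function theorem the `n`-th powers contain a neighbourhood of `1`
and form an open subgroup of `Fˣ`. If `F` is moreover locally compact, multiplying by powers of
`cⁿ`, where `‖c‖ > 1`, moves every unit into the compact annulus `1 ≤ ‖x‖ ≤ ‖cⁿ‖`; the quotient by
an open subgroup is discrete, so it is the image of a compact set, hence finite. A finite extension
of `ℚ₂` is such a field for its spectral norm.
-/

open Filter Topology

theorem Subgroup.finiteIndex_of_isOpen_of_isCompact {G : Type*} [Group G] [TopologicalSpace G]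
    [SeparatelyContinuousMul G] {H : Subgroup G} (hH : IsOpen (H : Set G)) {K : Set G}
    (hK : IsCompact K) (hKH : ∀ g : G, ∃ h ∈ H, g * h ∈ K) : H.FiniteIndex := by
  have := QuotientGroup.discreteTopology hH
  have hfin : ((↑) '' K : Set (G ⧸ H)).Finite :=
    (hK.image QuotientGroup.continuous_mk).finite_of_discrete
  have : Finite (G ⧸ H) := by
    refine Set.finite_univ_iff.mp (hfin.subset fun q _ => ?_)
    obtain ⟨g, rfl⟩ := QuotientGroup.mk_surjective q
    obtain ⟨h, hH, hgh⟩ := hKH g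
    exact ⟨g * h, hgh, QuotientGroup.eq.mpr (by simpa using H.inv_mem hH)⟩
  exact Subgroup.finiteIndex_of_finite_quotient

section NontriviallyNormedField

variable {F : Type*} [NontriviallyNormedField F]

theorem range_pow_mem_nhds_one [CompleteSpace F] {n : ℕ} (hn : (n : F) ≠ 0) :
    Set.range (fun x : F => x ^ n) ∈ 𝓝 (1 : F) := by
  have hmap := (hasStrictDerivAt_pow n (1 : F)).map_nhds_eq (by simpa using hn)
  rw [one_pow] at hmap
  exact hmap ▸ range_mem_map

theorem isOpen_range_powMonoidHom [CompleteSpace F] {n : ℕ} (hn : (n : F) ≠ 0) :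
    IsOpen ((powMonoidHom n : Fˣ →* Fˣ).range : Set Fˣ) := by
  refine Subgroup.isOpen_of_mem_nhds _ (g := 1) ?_
  filter_upwards [Units.continuous_val.continuousAt (range_pow_mem_nhds_one hn)]
    with u ⟨x, hx⟩
  have hx0 : x ≠ 0 := ne_zero_pow (by rintro rfl; simp at hn) (hx ▸ u.ne_zero)
  exact ⟨Units.mk0 x hx0, Units.ext hx⟩

theorem isCompact_units_norm_mem_Icc [ProperSpace F] {a : ℝ} (ha : 0 < a) (b : ℝ) :
    IsCompact {u : Fˣ | ‖(u : F)‖ ∈ Set.Icc a b} := by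
  have hA : IsCompact {x : F | ‖x‖ ∈ Set.Icc a b} :=
    (isCompact_closedBall (0 : F) b).of_isClosed_subset
      (isClosed_Icc.preimage continuous_norm) fun x hx => mem_closedBall_zero_iff.mpr hx.2
  refine Units.isEmbedding_val₀.isInducing.isCompact_preimage' hA fun x hx => ?_
  exact ⟨Units.mk0 x (norm_pos_iff.mp (ha.trans_le hx.1)), rfl⟩

theorem exists_norm_mul_zpow_mem_Ico {c : F} (hc : 1 < ‖c‖) {x : F} (hx : x ≠ 0) :
    ∃ m : ℤ, ‖x * c ^ m‖ ∈ Set.Ico 1 ‖c‖ := by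
  obtain ⟨m, hle, hlt⟩ := exists_mem_Ico_zpow (norm_pos_iff.mpr hx) hc
  have hc0 : 0 < ‖c‖ := one_pos.trans hc
  have hpos : 0 < ‖c‖ ^ m := zpow_pos hc0 m
  refine ⟨-m, ?_, ?_⟩
  · rwa [norm_mul, norm_zpow, zpow_neg, ← div_eq_mul_inv, one_le_div hpos]
  · rwa [norm_mul, norm_zpow, zpow_neg, ← div_eq_mul_inv, div_lt_iff₀ hpos,
      ← zpow_one_add₀ hc0.ne', add_comm]

theorem finiteIndex_range_powMonoidHom [ProperSpace F] {n : ℕ} (hn : (n : F) ≠ 0) :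
    (powMonoidHom n : Fˣ →* Fˣ).range.FiniteIndex := by
  obtain ⟨c, hc⟩ := NormedField.exists_one_lt_norm F
  have hcn : 1 < ‖c ^ n‖ := by
    rw [norm_pow]
    exact one_lt_pow₀ hc (by rintro rfl; simp at hn)
  let γ : Fˣ := Units.mk0 c (norm_pos_iff.mp (one_pos.trans hc))
  refine Subgroup.finiteIndex_of_isOpen_of_isCompact (isOpen_range_powMonoidHom hn)
    (isCompact_units_norm_mem_Icc one_pos ‖c ^ n‖) fun u => ?_
  obtain ⟨m, hm⟩ := exists_norm_mul_zpow_mem_Ico hcn u.ne_zero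
  refine ⟨(γ ^ m) ^ n, ⟨γ ^ m, rfl⟩, Set.Ico_subset_Icc_self ?_⟩
  have hval : ((u * (γ ^ m) ^ n : Fˣ) : F) = u * (c ^ n) ^ m := by
    simp only [Units.val_mul, Units.val_pow_eq_pow_val, Units.val_zpow_eq_zpow_val,
      Units.val_mk0, γ]
    rw [← zpow_natCast, ← zpow_natCast, ← zpow_mul, ← zpow_mul, mul_comm (n : ℤ)]
  rwa [hval]

end NontriviallyNormedField

/-- **Lemma.** Let `F` be a finite-dimensional field extension of the field `ℚ₂` of `2`-adic
numbers. Then the subgroup of squares `(F^×)²` has finite index in `F^×`. -/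
theorem squares_finiteIndex_of_finiteDimensional_Q2 (F : Type*) [Field F]
    [Algebra ℚ_[2] F] [FiniteDimensional ℚ_[2] F] :
    ((powMonoidHom 2 : Fˣ →* Fˣ).range).FiniteIndex := by
  let := spectralNorm.nontriviallyNormedField ℚ_[2] F
  let := spectralNorm.normedSpace ℚ_[2] F
  have : ProperSpace F := FiniteDimensional.proper ℚ_[2] F
  have : CharZero F := charZero_of_injective_algebraMap (algebraMap ℚ_[2] F).injective
  exact finiteIndex_range_powMonoidHom (n := 2) two_ne_zero
end

section
/- Let K be a global field of characteristic ≠ 2 and let Δ be a finite nonempty set of primes of K, each with finite residue field of odd cardinality. Let a ∈ K^× satisfy, for every 𝔮 ∈ Δ: v_𝔮(a) = 0 and the image of a in the residue field 𝔽_𝔮 is not a square. Let J = ⋂_{𝔮 ∈ Δ} 𝔪_𝔮, where 𝔪_𝔮 = {x ∈ K : v_𝔮(x) ≥ 1}. Then for x ∈ K^×, the following are equivalent: (i) there exist t ∈ K^× and j ∈ J with x = a·t²·(1+j); (ii) there exists t ∈ K^× such that for every 𝔮 ∈ Δ, v_𝔮(x·t²) = 0 and the image of x·t² in the residue field 𝔽_𝔮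 is not a square. -/
/-- A global field: a number field, or a global function field, i.e. a finite extension of the
field of rational functions in one variable over a finite field. -/
def IsGlobalField (K : Type*) [Field K] : Prop :=
  NumberField K ∨
    ∃ (Fq : Type) (_ : Field Fq) (_ : Fintype Fq) (_ : Algebra (RatFunc Fq) K),
      FunctionField Fq K

/-- A prime of a field `K`: a normalized discrete valuation on `K`, encoded multiplicatively
as a valuation with values in `ℤₘ₀ = WithZero (Multiplicative ℤ)` which is surjective
(i.e. `v : K^× ↠ ℤ` is onto).  For `x ≠ 0`, `v(x) = 0` iff `val x = 1`, and `v(x) ≥ 1` iff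
`val x ≤ ofAdd (-1)`. -/
structure NormDiscValuation (K : Type*) [Field K] where
  val : Valuation K (WithZero (Multiplicative ℤ))
  surjective : Function.Surjective val

/-- `v(j) ≥ 1`, i.e. `j` lies in the maximal ideal `𝔪_𝔮` of the valuation ring `O_𝔮`. -/
def NormDiscValuation.InMaxIdeal {K : Type*} [Field K] (q : NormDiscValuation K) (j : K) :
    Prop :=
  q.val j ≤ ((Multiplicative.ofAdd (-1 : ℤ) : Multiplicative ℤ) : WithZero (Multiplicative ℤ))

/-- `z` is a unit of the valuation ring `O_𝔮` whose image in the residue field `𝔽_𝔮` is not a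
square. -/
def NormDiscValuation.IsNonSquareUnitAt {K : Type*} [Field K] (q : NormDiscValuation K)
    (z : K) : Prop :=
  q.val z = 1 ∧ ∃ z' : q.val.valuationSubring, (z' : K) = z ∧
    ¬IsSquare (IsLocalRing.residue _ z')


open Multiplicative WithZero

namespace NSQAux

abbrev ZM := WithZero (Multiplicative ℤ)

noncomputable section

abbrev e (n : ℤ) : ZM := ((ofAdd n : Multiplicative ℤ) : ZM)

lemma e_lt_e {m n : ℤ} : e m < e n ↔ m < n := by
  rw [WithZero.coe_lt_coe]; exact Multiplicative.ofAdd_lt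

lemma e_le_e {m n : ℤ} : e m ≤ e n ↔ m ≤ n := by
  rw [WithZero.coe_le_coe]; exact Multiplicative.ofAdd_le

lemma e_zero : e 0 = 1 := rfl

lemma e_ne_zero (n : ℤ) : e n ≠ 0 := WithZero.coe_ne_zero

lemma e_mul (m n : ℤ) : e m * e n = e (m + n) := by
  rw [← WithZero.coe_mul, ← ofAdd_add]

lemma e_zpow (m : ℤ) (k : ℤ) : (e m) ^ k = e (k * m) := by
  rw [← WithZero.coe_zpow, ← ofAdd_zsmul, smul_eq_mul]

lemma e_pow (m : ℤ) (k : ℕ) : (e m) ^ k = e (k * m) := by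
  have := e_zpow m (k : ℤ)
  rwa [zpow_natCast] at this

lemma e_inv (m : ℤ) : (e m)⁻¹ = e (-m) := by
  rw [← WithZero.coe_inv]; norm_cast

lemma exists_e {x : ZM} (hx : x ≠ 0) : ∃ n : ℤ, x = e n := by
  obtain ⟨u, rfl⟩ := WithZero.ne_zero_iff_exists.mp hx
  exact ⟨toAdd u, by simp [e]⟩

lemma le_em1_of_lt_one {x : ZM} (h : x < 1) : x ≤ e (-1) := by
  rcases eq_or_ne x 0 with rfl | hx
  · exact zero_le'
  · obtain ⟨n, rfl⟩ := exists_e hx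
    rw [← e_zero, e_lt_e] at h
    exact e_le_e.mpr (by omega)

variable {K : Type*} [Field K]

/-- The exponent of a nonzero element. -/
lemma exists_exp (v : Valuation K ZM) {x : K} (hx : x ≠ 0) : ∃ n : ℤ, v x = e n :=
  exists_e ((Valuation.ne_zero_iff v).mpr hx)

lemma exists_lt_one_one_le {v w : Valuation K ZM}
    (hv : Function.Surjective v) (hw : Function.Surjective w) (hvw : v ≠ w) :
    ∃ x : K, v x < 1 ∧ 1 ≤ w x := by
  by_contra hcon
  push_neg at hcon
  have H : ∀ x : K, v x < 1 → w x < 1 := hcon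
  obtain ⟨π, hπ⟩ := hv (e (-1))
  have hπ0 : π ≠ 0 := by
    intro h; rw [h, map_zero] at hπ; exact e_ne_zero _ hπ.symm
  have hwπlt : w π < 1 := H π (by rw [hπ, ← e_zero]; exact e_lt_e.mpr (by omega))
  obtain ⟨p, hp⟩ := exists_exp w hπ0
  have hpneg : p ≤ -1 := by
    rw [hp, ← e_zero, e_lt_e] at hwπlt; omega
  -- key claim: for all nonzero x, exponents m (for v) and n (for w) satisfy n + m * p = 0
  have key : ∀ x : K, x ≠ 0 → ∀ m n : ℤ, v x = e m → w x = e n → n + m * p = 0 := by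
    intro x hx0 m n hm hn
    have step : ∀ k : ℤ, k * (n + m * p) ≤ -p - 1 := by
      intro k
      set y : K := x ^ k * π ^ (k * m + 1) with hy
      have hvy : v y = e (-1) := by
        rw [hy, map_mul, map_zpow₀, map_zpow₀, hm, hπ, e_zpow, e_zpow, e_mul]
        congr 1; ring
      have hwy : w y < 1 := H y (by rw [hvy, ← e_zero]; exact e_lt_e.mpr (by omega))
      have : w y = e (k * n + (k * m + 1) * p) := by
        rw [hy, map_mul, map_zpow₀, map_zpow₀, hn, hp, e_zpow, e_zpow, e_mul]
      rw [this, ← e_zero, e_lt_e] at hwy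
      nlinarith [hwy]
    have h1 := step (-p)
    have h2 := step p
    nlinarith [h1, h2, hpneg]
  -- surjectivity of w forces p = -1
  obtain ⟨x₀, hx₀⟩ := hw (e 1)
  have hx₀0 : x₀ ≠ 0 := by
    intro h; rw [h, map_zero] at hx₀; exact e_ne_zero _ hx₀.symm
  obtain ⟨m₀, hm₀⟩ := exists_exp v hx₀0
  have h10 : (1 : ℤ) + m₀ * p = 0 := key x₀ hx₀0 m₀ 1 hm₀ hx₀
  have hpm1 : p = -1 := by
    have hup : IsUnit p := IsUnit.of_mul_eq_one (a := p) (-m₀) (by linear_combination -h10)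
    rcases Int.isUnit_iff.mp hup with h | h <;> omega
  apply hvw
  ext x
  rcases eq_or_ne x 0 with rfl | hx0
  · simp
  · obtain ⟨m, hm⟩ := exists_exp v hx0
    obtain ⟨n, hn⟩ := exists_exp w hx0
    have h := key x hx0 m n hm hn
    rw [hpm1] at h
    rw [hm, hn]; congr 1; omega

lemma exists_one_lt_lt_one {v w : Valuation K ZM}
    (hv : Function.Surjective v) (hw : Function.Surjective w) (hvw : v ≠ w) :
    ∃ z : K, 1 < v z ∧ w z < 1 := by
  obtain ⟨x, hx1, hx2⟩ := exists_lt_one_one_le hv hw hvw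
  obtain ⟨y, hy1, hy2⟩ := exists_lt_one_one_le hw hv (Ne.symm hvw)
  have hx0 : x ≠ 0 := by
    intro h; rw [h, map_zero] at hx2; exact (not_le.mpr zero_lt_one) hx2
  refine ⟨y / x, ?_, ?_⟩
  · have h : v (y / x) * v x = v y := by
      rw [← map_mul, div_mul_cancel₀ _ hx0]
    by_contra hc
    push_neg at hc
    have : v y ≤ v x := h ▸ (mul_le_of_le_one_left' hc)
    exact absurd (lt_of_le_of_lt (hy2.trans this) hx1) (lt_irrefl _)
  · have h : w (y / x) * w x = w y := by
      rw [← map_mul, div_mul_cancel₀ _ hx0]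
    by_contra hc
    push_neg at hc
    have : w x ≤ w y := h ▸ le_mul_of_one_le_left' hc
    exact absurd (lt_of_le_of_lt (hx2.trans this) hy1) (lt_irrefl _)

lemma NDV_val_injective : Function.Injective (NormDiscValuation.val (K := K)) := by
  rintro ⟨v, hv⟩ ⟨w, hw⟩ h
  simpa using h

/-- uniform smallness: given finitely many valuations with `w z < 1` and elements `c w`,
find `k` making `(w z)^k * w (c w) < 1` for all `w` in the finset. -/
lemma exists_pow_mul_lt (T : Finset (NormDiscValuation K)) (z : K) (c : NormDiscValuation K → K)
    (hz : ∀ w ∈ T, w.val z < 1) :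
    ∃ k : ℕ, 1 ≤ k ∧ ∀ w ∈ T, (w.val z) ^ k * w.val (c w) < 1 := by
  obtain ⟨M, hM⟩ := Finset.exists_le (T.image fun w => w.val (c w))
  obtain ⟨B, hB⟩ : ∃ B : ℤ, M ≤ e B := by
    rcases eq_or_ne M 0 with rfl | h0
    · exact ⟨0, zero_le'⟩
    · obtain ⟨n, rfl⟩ := exists_e h0; exact ⟨n, le_refl _⟩
  refine ⟨B.toNat + 1, by omega, fun w hw => ?_⟩
  set k : ℕ := B.toNat + 1
  have h1 : (w.val z) ^ k ≤ e (-(k : ℤ)) := by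
    calc (w.val z) ^ k ≤ (e (-1)) ^ k := pow_le_pow_left' (le_em1_of_lt_one (hz w hw)) k
    _ = e (-(k:ℤ)) := by rw [e_pow]; congr 1; ring
  have h2 : w.val (c w) ≤ e B :=
    le_trans (hM _ (Finset.mem_image_of_mem _ hw)) hB
  calc (w.val z) ^ k * w.val (c w) ≤ e (-(k:ℤ)) * e B := mul_le_mul' h1 h2
  _ = e (B - k) := by rw [e_mul]; congr 1; ring
  _ < 1 := by rw [← e_zero, e_lt_e]; omega

lemma exists_one_lt_forall_lt (v : NormDiscValuation K) (T : Finset (NormDiscValuation K))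
    (hT : v ∉ T) : ∃ z : K, 1 < v.val z ∧ ∀ w ∈ T, w.val z < 1 := by
  classical
  induction T using Finset.induction with
  | empty =>
    obtain ⟨z, hz⟩ := v.surjective (e 1)
    exact ⟨z, by rw [hz, ← e_zero]; exact e_lt_e.mpr one_pos, fun w hw => absurd hw (by simp)⟩
  | @insert w' T' hw' ih =>
    have hvT' : v ∉ T' := fun h => hT (Finset.mem_insert_of_mem h)
    have hvw' : v ≠ w' := fun h => hT (h ▸ Finset.mem_insert_self _ _)
    obtain ⟨z, hz1, hz2⟩ := ih hvT'
    obtain ⟨z₂, hz₂1, hz₂2⟩ := exists_one_lt_lt_one v.surjective w'.surjective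
      (fun h => hvw' (NDV_val_injective h))
    have hz0 : z ≠ 0 := by
      intro h; rw [h, map_zero] at hz1; exact (not_le.mpr hz1) zero_le'
    have hz₂0 : z₂ ≠ 0 := by
      intro h; rw [h, map_zero] at hz₂1; exact (not_le.mpr hz₂1) zero_le'
    rcases lt_trichotomy (w'.val z) 1 with h | h | h
    · refine ⟨z, hz1, fun w hw => ?_⟩
      rcases Finset.mem_insert.mp hw with rfl | hw
      · exact h
      · exact hz2 w hw
    · -- w' z = 1 : use z^k * z₂
      obtain ⟨k, hk1, hk⟩ := exists_pow_mul_lt T' z (fun _ => z₂) hz2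
      refine ⟨z ^ k * z₂, ?_, fun w hw => ?_⟩
      · rw [map_mul, map_pow]
        exact one_lt_mul_of_le_of_lt (one_le_pow_of_one_le' hz1.le k) hz₂1
      · rcases Finset.mem_insert.mp hw with rfl | hw
        · rw [map_mul, map_pow, h, one_pow, one_mul]; exact hz₂2
        · rw [map_mul, map_pow]; exact hk w hw
    · -- 1 < w' z : use z^k/(1+z^k) * z₂
      obtain ⟨k, hk1, hk⟩ := exists_pow_mul_lt T' z (fun _ => z₂) hz2
      have hvzk : 1 < v.val (z ^ k) := by
        rw [map_pow]; exact one_lt_pow' hz1 (by omega)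
      have hwzk : 1 < w'.val (z ^ k) := by
        rw [map_pow]; exact one_lt_pow' h (by omega)
      have hne0 : (1 : K) + z ^ k ≠ 0 := by
        intro hc
        have : v.val (1 + z ^ k) = max (v.val 1) (v.val (z ^ k)) :=
          Valuation.map_add_of_distinct_val _ (by rw [map_one]; exact hvzk.ne)
        rw [hc, map_zero, map_one, max_eq_right hvzk.le] at this
        exact (Valuation.ne_zero_iff _).mpr (pow_ne_zero _ hz0) this.symm
      set u : K := z ^ k / (1 + z ^ k) * z₂ with hu
      have key : ∀ vv : Valuation K ZM, 1 < vv (z ^ k) → vv u = vv z₂ := by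
        intro vv hvv
        have hadd : vv (1 + z ^ k) = vv (z ^ k) := by
          rw [Valuation.map_add_of_distinct_val _ (by rw [map_one]; exact hvv.ne),
            map_one, max_eq_right hvv.le]
        rw [hu, map_mul, map_div₀, hadd, div_self ((Valuation.ne_zero_iff _).mpr
          (pow_ne_zero _ hz0)), one_mul]
      have key2 : ∀ vv : Valuation K ZM, vv (z ^ k) < 1 → vv u = vv (z^k) * vv z₂ := by
        intro vv hvv
        have hadd : vv (1 + z ^ k) = 1 := Valuation.map_one_add_of_lt _ hvv
        rw [hu, map_mul, map_div₀, hadd, div_one]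
      refine ⟨u, ?_, fun w hw => ?_⟩
      · rw [key _ hvzk]; exact hz₂1
      · rcases Finset.mem_insert.mp hw with rfl | hw
        · rw [key _ hwzk]; exact hz₂2
        · have hwz : w.val (z ^ k) < 1 := by
            rw [map_pow]
            calc (w.val z) ^ k ≤ (e (-1))^k := pow_le_pow_left' (le_em1_of_lt_one (hz2 w hw)) k
            _ = e (-(k:ℤ)) := by rw [e_pow]; congr 1; ring
            _ < 1 := by rw [← e_zero, e_lt_e]; omega
          rw [key2 _ hwz, map_pow]
          exact hk w hw

lemma pow_le_of_lt_one {x : ZM} (h : x < 1) (k : ℕ) : x ^ k ≤ e (-(k : ℤ)) := by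
  calc x ^ k ≤ (e (-1)) ^ k := pow_le_pow_left' (le_em1_of_lt_one h) k
  _ = e (-(k : ℤ)) := by rw [e_pow]; congr 1; ring

lemma one_add_ne_zero {v : Valuation K ZM} {y : K} (h : v y ≠ 1) : (1 : K) + y ≠ 0 := by
  intro hc
  have hy : y = -1 := by linear_combination hc
  rw [hy, Valuation.map_neg, map_one] at h
  exact h rfl

lemma val_one_add_of_one_lt {v : Valuation K ZM} {y : K} (h : 1 < v y) : v (1 + y) = v y := by
  rw [Valuation.map_add_of_distinct_val v (by rw [map_one]; exact h.ne), map_one,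
    max_eq_right h.le]

lemma weak_approx (T : Finset (NormDiscValuation K)) (u : NormDiscValuation K → K) :
    ∃ s : K, ∀ q ∈ T, q.val (s - u q) < 1 := by
  classical
  choose! z hz1 hz2 using fun q (_ : q ∈ T) =>
    exists_one_lt_forall_lt q (T.erase q) (Finset.notMem_erase q T)
  obtain ⟨M, hM⟩ := Finset.exists_le ((T ×ˢ T).image fun p => p.1.val (u p.2))
  obtain ⟨B, hB⟩ : ∃ B : ℤ, M ≤ e B := by
    rcases eq_or_ne M 0 with rfl | h0
    · exact ⟨0, zero_le'⟩
    · obtain ⟨n, rfl⟩ := exists_e h0; exact ⟨n, le_refl _⟩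
  have hBmem : ∀ q ∈ T, ∀ r ∈ T, q.val (u r) ≤ e B := fun q hq r hr =>
    le_trans (hM _ (Finset.mem_image_of_mem (fun p => p.1.val (u p.2))
      (Finset.mem_product.mpr ⟨hq, hr⟩ : (q, r) ∈ T ×ˢ T))) hB
  set k : ℕ := B.toNat + 1 with hk
  have hebound : e (B - k) < 1 := by rw [← e_zero, e_lt_e]; omega
  set f : NormDiscValuation K → K := fun r => z r ^ k / (1 + z r ^ k) * u r with hf
  refine ⟨∑ r ∈ T, f r, fun q hq => ?_⟩
  have hsplit : (∑ r ∈ T, f r) - u q = (f q - u q) + ∑ r ∈ T.erase q, f r := by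
    rw [← Finset.add_sum_erase T f hq]; ring
  rw [hsplit]
  apply Valuation.map_add_lt
  · -- the main term
    have hq1 : 1 < q.val (z q) := hz1 q hq
    have hz0 : z q ≠ 0 := by
      intro h; rw [h, map_zero] at hq1; exact lt_irrefl _ (hq1.trans_le zero_le')
    obtain ⟨m, hm⟩ := exists_exp q.val hz0
    have hm1 : 1 ≤ m := by rw [hm, ← e_zero, e_lt_e] at hq1; omega
    have hzk : q.val (z q ^ k) = e (k * m) := by rw [map_pow, hm, e_pow]
    have hkm : (k : ℤ) ≤ k * m := le_mul_of_one_le_right (by positivity) hm1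
    have h1zk : 1 < q.val (z q ^ k) := by
      rw [hzk, ← e_zero, e_lt_e]; omega
    have hne : (1 : K) + z q ^ k ≠ 0 := one_add_ne_zero (v := q.val) (by rw [hzk] at h1zk ⊢; exact h1zk.ne')
    have hfe : f q - u q = -(1 / (1 + z q ^ k)) * u q := by
      rw [hf]; field_simp; ring
    calc q.val (f q - u q) = (q.val (z q ^ k))⁻¹ * q.val (u q) := by
          rw [hfe, map_mul, Valuation.map_neg, one_div, map_inv₀,
            val_one_add_of_one_lt h1zk]
    _ = e (-(k * m)) * q.val (u q) := by rw [hzk, e_inv]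
    _ ≤ e (-(k : ℤ)) * e B := mul_le_mul' (e_le_e.mpr (by omega)) (hBmem q hq q hq)
    _ = e (B - k) := by rw [e_mul]; congr 1; ring
    _ < 1 := hebound
  · -- the error terms
    apply Valuation.map_sum_lt _ (one_ne_zero)
    intro r hr
    have hrT : r ∈ T := Finset.mem_of_mem_erase hr
    have hqr : q ∈ T.erase r :=
      Finset.mem_erase.mpr ⟨fun h => (Finset.mem_erase.mp hr).1 h.symm, hq⟩
    have hlt : q.val (z r) < 1 := hz2 r hrT q hqr
    have hpow : q.val (z r ^ k) ≤ e (-(k : ℤ)) := by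
      rw [map_pow]; exact pow_le_of_lt_one hlt k
    have hltk : q.val (z r ^ k) < 1 :=
      lt_of_le_of_lt hpow (by rw [← e_zero, e_lt_e]; omega)
    have hadd : q.val (1 + z r ^ k) = 1 := Valuation.map_one_add_of_lt _ hltk
    calc q.val (f r) = q.val (z r ^ k) * q.val (u r) := by
          rw [hf, map_mul, map_div₀, hadd, div_one]
    _ ≤ e (-(k : ℤ)) * e B := mul_le_mul' hpow (hBmem q hq r hrT)
    _ = e (B - k) := by rw [e_mul]; congr 1; ring
    _ < 1 := hebound


lemma isUnit_iff_val_eq_one (q : NormDiscValuation K) (z' : q.val.valuationSubring) :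
    IsUnit z' ↔ q.val (z' : K) = 1 := by
  constructor
  · rintro ⟨u, rfl⟩
    have h : ((u : q.val.valuationSubring) : K) * ((u⁻¹ : _) : K) = 1 := by
      have := congrArg (fun w : q.val.valuationSubring => (w : K)) u.mul_inv
      push_cast at this
      simpa using this

    have h2 : q.val (u : q.val.valuationSubring) * q.val ((u⁻¹ : _) : K) = 1 := by
      rw [← map_mul, h, map_one]
    have hb : q.val ((u⁻¹ : _) : K) ≤ 1 := (u⁻¹ : q.val.valuationSubringˣ).1.2
    have ha : q.val ((u : q.val.valuationSubring) : K) ≤ 1 := (u : q.val.valuationSubringˣ).1.2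
    refine le_antisymm ha ?_
    calc (1 : ZM) = q.val (u : q.val.valuationSubring) * q.val ((u⁻¹ : _) : K) := h2.symm
    _ ≤ q.val (u : q.val.valuationSubring) * 1 := mul_le_mul_right hb _
    _ = q.val (u : q.val.valuationSubring) := mul_one _
  · intro h
    have hz0 : (z' : K) ≠ 0 := by
      intro hc; rw [hc, map_zero] at h; exact zero_ne_one h
    have hinv : (z' : K)⁻¹ ∈ q.val.valuationSubring := by
      rw [Valuation.mem_valuationSubring_iff, map_inv₀, h, inv_one]
    refine IsUnit.of_mul_eq_one (a := z') ⟨(z' : K)⁻¹, hinv⟩ ?_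
    ext
    push_cast
    exact mul_inv_cancel₀ hz0

lemma residue_eq_zero_iff_val_lt_one (q : NormDiscValuation K)
    (z' : q.val.valuationSubring) :
    IsLocalRing.residue _ z' = 0 ↔ q.val (z' : K) < 1 := by
  rw [IsLocalRing.residue_eq_zero_iff, IsLocalRing.mem_maximalIdeal, mem_nonunits_iff,
    isUnit_iff_val_eq_one]
  constructor
  · intro h
    exact lt_of_le_of_ne (z'.2 : q.val (z' : K) ≤ 1) h
  · intro h
    exact h.ne

lemma isSquare_mul_inv_of_not_isSquare {F : Type*} [Field F] [Finite F] {a b : F}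
    (ha : a ≠ 0) (hb : b ≠ 0) (hA : ¬IsSquare a) (hB : ¬IsSquare b) : IsSquare (a * b⁻¹) := by
  classical
  letI := Fintype.ofFinite F
  have h1 : quadraticChar F a = -1 := quadraticChar_neg_one_iff_not_isSquare.mpr hA
  have h2 : quadraticChar F b⁻¹ = -1 :=
    quadraticChar_neg_one_iff_not_isSquare.mpr (by simpa using hB)
  have h3 : quadraticChar F (a * b⁻¹) = 1 := by rw [map_mul, h1, h2]; ring
  exact (quadraticChar_one_iff_isSquare (mul_ne_zero ha (inv_ne_zero hb))).mp h3

lemma exists_local_sqrt (q : NormDiscValuation K)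
    (hfin : Finite (IsLocalRing.ResidueField q.val.valuationSubring))
    {a b : K} (hA : q.IsNonSquareUnitAt a) (hB : q.IsNonSquareUnitAt b) :
    ∃ u : K, q.val u = 1 ∧ q.val (b - a * u ^ 2) < 1 := by
  obtain ⟨ha1, a', ha', hA'⟩ := hA
  obtain ⟨hb1, b', hb', hB'⟩ := hB
  have hra : IsLocalRing.residue _ a' ≠ 0 := by
    rw [Ne, residue_eq_zero_iff_val_lt_one, ha', ha1]
    exact lt_irrefl _
  have hrb : IsLocalRing.residue _ b' ≠ 0 := by
    rw [Ne, residue_eq_zero_iff_val_lt_one, hb', hb1]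
    exact lt_irrefl _
  obtain ⟨c, hc⟩ := isSquare_mul_inv_of_not_isSquare hrb hra hB' hA'
  have hc0 : c ≠ 0 := by
    intro h
    rw [h, mul_zero] at hc
    exact mul_ne_zero hrb (inv_ne_zero hra) hc
  obtain ⟨u', hu'⟩ := IsLocalRing.residue_surjective (R := q.val.valuationSubring) c
  have hu1 : q.val (u' : K) = 1 := by
    have h1 : ¬ q.val (u' : K) < 1 := by
      rw [← residue_eq_zero_iff_val_lt_one, hu']
      exact hc0
    exact le_antisymm (u'.2 : q.val (u' : K) ≤ 1) (not_lt.mp h1)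
  refine ⟨(u' : K), hu1, ?_⟩
  have hd : IsLocalRing.residue _ (b' - a' * u' ^ 2) = 0 := by
    rw [map_sub, map_mul, map_pow, hu']
    rw [pow_two, ← hc]
    field_simp
    simp
  rw [residue_eq_zero_iff_val_lt_one] at hd
  have : ((b' - a' * u' ^ 2 : q.val.valuationSubring) : K) = b - a * (u' : K) ^ 2 := by
    push_cast
    rw [ha', hb']
  rwa [this] at hd

end
end NSQAux


open NSQAux

/-- **Lemma.** Let `K` be a global field of characteristic `≠ 2`, `Δ` a finite nonempty set of
primes of `K`, each with finite residue field of odd cardinality, and `a ∈ K^×` a `𝔮`-adic unit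
whose image in `𝔽_𝔮` is a non-square for every `𝔮 ∈ Δ`.  Let `J = ⋂_{𝔮 ∈ Δ} 𝔪_𝔮`.  Then for
`x ∈ K^×` the following are equivalent:
(i) `x ∈ a·(K^×)²·(1+J)`, i.e. there are `t ∈ K^×` and `j ∈ J` with `x = a·t²·(1+j)`;
(ii) there is `t ∈ K^×` such that for every `𝔮 ∈ Δ`, `v_𝔮(x·t²) = 0` and the image of `x·t²`
in `𝔽_𝔮` is not a square. -/
theorem mem_coset_iff_nonsquare_at_all_primes (K : Type*) [Field K]
    (hK : IsGlobalField K) (hchar : ringChar K ≠ 2)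
    (Δ : Set (NormDiscValuation K)) (hfin : Δ.Finite) (hne : Δ.Nonempty)
    (hresfin : ∀ q ∈ Δ, Finite (IsLocalRing.ResidueField q.val.valuationSubring))
    (hresodd : ∀ q ∈ Δ, Odd (Nat.card (IsLocalRing.ResidueField q.val.valuationSubring)))
    (a : K) (ha0 : a ≠ 0) (ha : ∀ q ∈ Δ, q.IsNonSquareUnitAt a)
    (x : K) (hx : x ≠ 0) :
    (∃ t : K, t ≠ 0 ∧ ∃ j : K, (∀ q ∈ Δ, q.InMaxIdeal j) ∧ x = a * t ^ 2 * (1 + j)) ↔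
      (∃ t : K, t ≠ 0 ∧ ∀ q ∈ Δ, q.IsNonSquareUnitAt (x * t ^ 2)) := by
  classical
  constructor
  · rintro ⟨t, ht, j, hj, hxe⟩
    refine ⟨t⁻¹, inv_ne_zero ht, fun q hq => ?_⟩
    have hxt : x * t⁻¹ ^ 2 = a * (1 + j) := by
      rw [hxe]; field_simp
    obtain ⟨ha1, a', ha', hA'⟩ := ha q hq
    have hjle : q.val j ≤ e (-1) := hj q hq
    have hjlt : q.val j < 1 :=
      lt_of_le_of_lt hjle (by rw [← e_zero]; exact e_lt_e.mpr (by omega))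
    have h1j : q.val (1 + j) = 1 := Valuation.map_one_add_of_lt _ hjlt
    constructor
    · rw [hxt, map_mul, ha1, h1j, mul_one]
    · set j' : q.val.valuationSubring := ⟨j, hjlt.le⟩ with hj'
      set w' : q.val.valuationSubring := 1 + j' with hw'
      refine ⟨a' * w', ?_, ?_⟩
      · show ((a' * w' : q.val.valuationSubring) : K) = x * t⁻¹ ^ 2
        rw [hxt]
        push_cast [hw', hj', ha']
        ring
      · have hres : IsLocalRing.residue _ w' = 1 := by
          rw [hw', map_add, map_one,
            (residue_eq_zero_iff_val_lt_one q j').mpr (by rwa [hj'] : q.val (j' : K) < 1),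
            add_zero]
        rw [map_mul, hres, mul_one]
        exact hA'
  · rintro ⟨t, ht, h⟩
    have hbne : x * t ^ 2 ≠ 0 := mul_ne_zero hx (pow_ne_zero _ ht)
    have hsel : ∀ q : NormDiscValuation K,
        ∃ u : K, q ∈ Δ → q.val u = 1 ∧ q.val (x * t ^ 2 - a * u ^ 2) < 1 := by
      intro q
      by_cases hq : q ∈ Δ
      · obtain ⟨u, h1, h2⟩ := exists_local_sqrt q (hresfin q hq) (ha q hq) (h q hq)
        exact ⟨u, fun _ => ⟨h1, h2⟩⟩
      · exact ⟨0, fun hc => absurd hc hq⟩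
    choose u hu using hsel
    obtain ⟨s, hs⟩ := weak_approx hfin.toFinset u
    have hsq : ∀ q ∈ Δ, q.val (s - u q) < 1 := fun q hq => hs q (hfin.mem_toFinset.mpr hq)
    have hval : ∀ q ∈ Δ, q.val s = 1 := by
      intro q hq
      have h1 := (hu q hq).1
      have h3 : q.val (s - u q) < q.val (u q) := by rw [h1]; exact hsq q hq
      have e1 := Valuation.map_add_of_distinct_val q.val (x := s - u q) (y := u q) h3.ne
      rw [sub_add_cancel] at e1
      rw [e1, max_eq_right h3.le, h1]
    obtain ⟨q₀, hq₀⟩ := hne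
    have hs0 : s ≠ 0 := by
      intro hc
      have := hval q₀ hq₀
      rw [hc, map_zero] at this
      exact zero_ne_one this
    refine ⟨s * t⁻¹, mul_ne_zero hs0 (inv_ne_zero ht),
      x * t ^ 2 / (a * s ^ 2) - 1, fun q hq => ?_, ?_⟩
    · have has2 : q.val (a * s ^ 2) = 1 := by
        rw [map_mul, map_pow, (ha q hq).1, hval q hq, one_pow, mul_one]
      have hnum : q.val (x * t ^ 2 - a * s ^ 2) < 1 := by
        have hdecomp : x * t ^ 2 - a * s ^ 2 =
            (x * t ^ 2 - a * u q ^ 2) + a * ((u q - s) * (u q + s)) := by ring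
        rw [hdecomp]
        apply Valuation.map_add_lt
        · exact (hu q hq).2
        · rw [map_mul, (ha q hq).1, one_mul, map_mul]
          have h1 : q.val (u q - s) < 1 := by
            rw [show u q - s = -(s - u q) by ring, Valuation.map_neg]
            exact hsq q hq
          have h2 : q.val (u q + s) ≤ 1 :=
            le_trans (q.val.map_add _ _) (max_le (hu q hq).1.le (hval q hq).le)
          calc q.val (u q - s) * q.val (u q + s) ≤ q.val (u q - s) * 1 :=
                mul_le_mul_right h2 _
          _ < 1 := by rwa [mul_one]
      have hjval : q.val (x * t ^ 2 / (a * s ^ 2) - 1) < 1 := by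
        have heq : x * t ^ 2 / (a * s ^ 2) - 1 = (x * t ^ 2 - a * s ^ 2) / (a * s ^ 2) := by
          have has20 : a * s ^ 2 ≠ 0 := mul_ne_zero ha0 (pow_ne_zero _ hs0)
          field_simp
        rw [heq, map_div₀, has2, div_one]
        exact hnum
      exact le_em1_of_lt_one hjval
    · have has20 : a * s ^ 2 ≠ 0 := mul_ne_zero ha0 (pow_ne_zero _ hs0)
      field_simp
      ring
end
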